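/- arXiv:1209.1383 — 6 statements merged into one kernel-verified Lean document; each statement's English description precedes it below -/
import Mathlib

section
/- Let n ≥ 1 and let f : ℂ × ℝ²₊ → ℂ^{n×n} be twice continuously differentiable (holomorphic in λ, C² jointly). Then at every point (λ,x) with λ ≠ 0 and λ² + ρ² ≠ 0, the operators D_ρ and D_z commute on f: D_ρ(D_z f) = D_z(D_ρ f). -/
open Matrix

attribute [local instance] Matrix.normedAddCommGroup Matrix.normedSpace

/-- The function `ω_ρ(λ, x) = -2ρλ/(λ² + ρ²)` on `ℂ × ℝ²`. -/
noncomputable def omegaRho (p : ℂ × ℝ × ℝ) : ℂ :=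
  -2 * (p.2.1 : ℂ) * p.1 / (p.1 ^ 2 + (p.2.1 : ℂ) ^ 2)

/-- The function `ω_z(λ, x) = -2λ²/(λ² + ρ²)` on `ℂ × ℝ²`. -/
noncomputable def omegaZ (p : ℂ × ℝ × ℝ) : ℂ :=
  -2 * p.1 ^ 2 / (p.1 ^ 2 + (p.2.1 : ℂ) ^ 2)

/-- The operator `D_ρ f = ∂_ρ f − ω_ρ ∂_λ f`. -/
noncomputable def Drho {E : Type*} [NormedAddCommGroup E] [NormedSpace ℂ E]
    (f : ℂ × ℝ × ℝ → E) (p : ℂ × ℝ × ℝ) : E :=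
  fderiv ℝ f p ((0 : ℂ), (1 : ℝ), (0 : ℝ)) -
    omegaRho p • fderiv ℝ f p ((1 : ℂ), (0 : ℝ), (0 : ℝ))

/-- The operator `D_z f = ∂_z f − ω_z ∂_λ f`. -/
noncomputable def Dzop {E : Type*} [NormedAddCommGroup E] [NormedSpace ℂ E]
    (f : ℂ × ℝ × ℝ → E) (p : ℂ × ℝ × ℝ) : E :=
  fderiv ℝ f p ((0 : ℂ), (0 : ℝ), (1 : ℝ)) -
    omegaZ p • fderiv ℝ f p ((1 : ℂ), (0 : ℝ), (0 : ℝ))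

/-!
Write `D_μ = ∂_μ − ω_μ ∂_λ`, with `∂_λ` the real derivative in the direction of `λ`. For a `C²`
function the second-order terms of `D_ρ D_z f − D_z D_ρ f` cancel by the symmetry of the second
derivative, leaving `(∂_z ω_ρ − ∂_ρ ω_z + ω_ρ ∂_λ ω_z − ω_z ∂_λ ω_ρ) ∂_λ f`. This curvature
coefficient vanishes for the given `ω` by a direct computation; conceptually, both `D_μ` annihilate
`ϖ`, hence so does their commutator `c ∂_λ`, and `∂_λ ϖ ≠ 0` forces `c = 0`.
-/

section TwistedDeriv

variable {V E : Type*} [NormedAddCommGroup V] [NormedSpace ℝ V]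
  [NormedAddCommGroup E] [NormedSpace ℂ E]

noncomputable def twistedDeriv (ω : V → ℂ) (u w : V) (f : V → E) (q : V) : E :=
  fderiv ℝ f q u - ω q • fderiv ℝ f q w

noncomputable def twistedCurvature (ω₁ ω₂ : V → ℂ) (u v w : V) (p : V) : ℂ :=
  fderiv ℝ ω₁ p v - fderiv ℝ ω₂ p u + ω₁ p * fderiv ℝ ω₂ p w - ω₂ p * fderiv ℝ ω₁ p w

variable {ω ω₁ ω₂ : V → ℂ} {u v w : V} {f : V → E} {p : V}

theorem fderiv_twistedDeriv_apply (hf : ContDiffAt ℝ 2 f p) (hω : DifferentiableAt ℝ ω p)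
    (x : V) :
    fderiv ℝ (twistedDeriv ω u w f) p x =
      fderiv ℝ (fderiv ℝ f) p x u -
        (fderiv ℝ ω p x • fderiv ℝ f p w + ω p • fderiv ℝ (fderiv ℝ f) p x w) := by
  have hf' : DifferentiableAt ℝ (fderiv ℝ f) p :=
    (hf.fderiv_right (m := 1) (by norm_num)).differentiableAt one_ne_zero
  have hu := hf'.hasFDerivAt.clm_apply (hasFDerivAt_const u p)
  have hw := hf'.hasFDerivAt.clm_apply (hasFDerivAt_const w p)
  have h : HasFDerivAt (twistedDeriv ω u w f) _ p := hu.sub (hω.hasFDerivAt.smul hw)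
  rw [h.fderiv]
  simp [add_comm]

theorem twistedDeriv_comm_sub (hf : ContDiffAt ℝ 2 f p) (hω₁ : DifferentiableAt ℝ ω₁ p)
    (hω₂ : DifferentiableAt ℝ ω₂ p) :
    twistedDeriv ω₁ u w (twistedDeriv ω₂ v w f) p -
        twistedDeriv ω₂ v w (twistedDeriv ω₁ u w f) p =
      twistedCurvature ω₁ ω₂ u v w p • fderiv ℝ f p w := by
  have hsymm := hf.isSymmSndFDerivAt (by simp)
  simp only [twistedDeriv, twistedCurvature, fderiv_twistedDeriv_apply hf hω₁,
    fderiv_twistedDeriv_apply hf hω₂]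
  rw [hsymm u v, hsymm u w, hsymm v w]
  module

theorem twistedDeriv_comm (hf : ContDiffAt ℝ 2 f p) (hω₁ : DifferentiableAt ℝ ω₁ p)
    (hω₂ : DifferentiableAt ℝ ω₂ p) (hflat : twistedCurvature ω₁ ω₂ u v w p = 0) :
    twistedDeriv ω₁ u w (twistedDeriv ω₂ v w f) p =
      twistedDeriv ω₂ v w (twistedDeriv ω₁ u w f) p :=
  sub_eq_zero.mp (by rw [twistedDeriv_comm_sub hf hω₁ hω₂, hflat, zero_smul])

end TwistedDeriv

theorem fderiv_apply_eq_of_hasDerivAt_comp_ofReal {V : Type*} [NormedAddCommGroup V]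
    [NormedSpace ℝ V] {ω : V → ℂ} {p v : V} (hω : DifferentiableAt ℝ ω p) {g : ℂ → ℂ}
    {g' a : ℂ} (hg : HasDerivAt g g' a) (hline : ∀ t : ℝ, ω (p + t • v) = g (a + t)) :
    fderiv ℝ ω p v = g' := by
  have hg₀ : HasDerivAt (fun w => g (a + w)) g' ((0 : ℝ) : ℂ) := by
    simpa using HasDerivAt.comp_const_add a 0 (by rwa [add_zero])
  rw [← hω.lineDeriv_eq_fderiv]
  exact HasLineDerivAt.lineDeriv (by simpa only [HasLineDerivAt, hline] using hg₀.comp_ofReal)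

theorem differentiableAt_omegaZ {p : ℂ × ℝ × ℝ} (hden : p.1 ^ 2 + (p.2.1 : ℂ) ^ 2 ≠ 0) :
    DifferentiableAt ℝ omegaZ p := by
  change DifferentiableAt ℝ (fun q : ℂ × ℝ × ℝ => -2 * q.1 ^ 2 * (q.1 ^ 2 + (q.2.1 : ℂ) ^ 2)⁻¹) p
  fun_prop (disch := exact hden)

theorem differentiableAt_omegaRho {p : ℂ × ℝ × ℝ} (hden : p.1 ^ 2 + (p.2.1 : ℂ) ^ 2 ≠ 0) :
    DifferentiableAt ℝ omegaRho p := by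
  change DifferentiableAt ℝ
    (fun q : ℂ × ℝ × ℝ => -2 * (q.2.1 : ℂ) * q.1 * (q.1 ^ 2 + (q.2.1 : ℂ) ^ 2)⁻¹) p
  fun_prop (disch := exact hden)

section

variable {p : ℂ × ℝ × ℝ} (hden : p.1 ^ 2 + (p.2.1 : ℂ) ^ 2 ≠ 0)
include hden

theorem fderiv_omegaZ_lambda :
    fderiv ℝ omegaZ p (1, 0, 0) = -4 * p.1 * (p.2.1 : ℂ) ^ 2 / (p.1 ^ 2 + (p.2.1 : ℂ) ^ 2) ^ 2 := by
  have hg : HasDerivAt (fun w => -2 * w ^ 2 / (w ^ 2 + (p.2.1 : ℂ) ^ 2))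
      (-4 * p.1 * (p.2.1 : ℂ) ^ 2 / (p.1 ^ 2 + (p.2.1 : ℂ) ^ 2) ^ 2) p.1 := by
    refine ((hasDerivAt_pow 2 p.1).const_mul (-2)).fun_div
      ((hasDerivAt_pow 2 p.1).add_const _) hden |>.congr_deriv ?_
    field_simp
    ring
  exact fderiv_apply_eq_of_hasDerivAt_comp_ofReal (differentiableAt_omegaZ hden) hg
    fun t => by simp [omegaZ]

theorem fderiv_omegaZ_rho :
    fderiv ℝ omegaZ p (0, 1, 0) = 4 * p.1 ^ 2 * p.2.1 / (p.1 ^ 2 + (p.2.1 : ℂ) ^ 2) ^ 2 := by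
  have hg : HasDerivAt (fun w => -2 * p.1 ^ 2 / (p.1 ^ 2 + w ^ 2))
      (4 * p.1 ^ 2 * p.2.1 / (p.1 ^ 2 + (p.2.1 : ℂ) ^ 2) ^ 2) (p.2.1 : ℂ) := by
    refine (hasDerivAt_const _ (-2 * p.1 ^ 2)).fun_div
      ((hasDerivAt_pow 2 (p.2.1 : ℂ)).const_add (p.1 ^ 2)) hden |>.congr_deriv ?_
    field_simp
    ring
  exact fderiv_apply_eq_of_hasDerivAt_comp_ofReal (differentiableAt_omegaZ hden) hg
    fun t => by simp [omegaZ]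

theorem fderiv_omegaRho_lambda :
    fderiv ℝ omegaRho p (1, 0, 0) =
      2 * p.2.1 * (p.1 ^ 2 - (p.2.1 : ℂ) ^ 2) / (p.1 ^ 2 + (p.2.1 : ℂ) ^ 2) ^ 2 := by
  have hg : HasDerivAt (fun w => -2 * p.2.1 * w / (w ^ 2 + (p.2.1 : ℂ) ^ 2))
      (2 * p.2.1 * (p.1 ^ 2 - (p.2.1 : ℂ) ^ 2) / (p.1 ^ 2 + (p.2.1 : ℂ) ^ 2) ^ 2) p.1 := by
    refine ((hasDerivAt_id' p.1).const_mul (-2 * (p.2.1 : ℂ))).fun_div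
      ((hasDerivAt_pow 2 p.1).add_const _) hden |>.congr_deriv ?_
    field_simp
    ring
  exact fderiv_apply_eq_of_hasDerivAt_comp_ofReal (differentiableAt_omegaRho hden) hg
    fun t => by simp [omegaRho]

theorem fderiv_omegaRho_z : fderiv ℝ omegaRho p (0, 0, 1) = 0 :=
  fderiv_apply_eq_of_hasDerivAt_comp_ofReal (differentiableAt_omegaRho hden)
    (hasDerivAt_const 0 (omegaRho p)) fun t => by simp [omegaRho]

theorem twistedCurvature_omegaRho_omegaZ :
    twistedCurvature omegaRho omegaZ (0, 1, 0) (0, 0, 1) (1, 0, 0) p = 0 := by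
  rw [twistedCurvature, fderiv_omegaRho_z hden, fderiv_omegaZ_rho hden,
    fderiv_omegaZ_lambda hden, fderiv_omegaRho_lambda hden, omegaRho, omegaZ]
  field_simp
  ring

end

theorem Drho_eq_twistedDeriv {E : Type*} [NormedAddCommGroup E] [NormedSpace ℂ E]
    (f : ℂ × ℝ × ℝ → E) : Drho f = twistedDeriv omegaRho (0, 1, 0) (1, 0, 0) f :=
  rfl

theorem Dzop_eq_twistedDeriv {E : Type*} [NormedAddCommGroup E] [NormedSpace ℂ E]
    (f : ℂ × ℝ × ℝ → E) : Dzop f = twistedDeriv omegaZ (0, 0, 1) (1, 0, 0) f :=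
  rfl

theorem statement0_general (n : ℕ)
    (f : ℂ × ℝ × ℝ → Matrix (Fin n) (Fin n) ℂ)
    (hf : ContDiffOn ℝ 2 f {p : ℂ × ℝ × ℝ | 0 < p.2.1})
    (p : ℂ × ℝ × ℝ) (hp : 0 < p.2.1)
    (hden : p.1 ^ 2 + (p.2.1 : ℂ) ^ 2 ≠ 0) :
    Drho (Dzop f) p = Dzop (Drho f) p := by
  have hopen : IsOpen {p : ℂ × ℝ × ℝ | 0 < p.2.1} := isOpen_lt continuous_const (by fun_prop)
  simp only [Drho_eq_twistedDeriv, Dzop_eq_twistedDeriv]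
  exact twistedDeriv_comm (hf.contDiffAt (hopen.mem_nhds hp)) (differentiableAt_omegaRho hden)
    (differentiableAt_omegaZ hden) (twistedCurvature_omegaRho_omegaZ hden)

/-- for `f : ℂ × ℝ²₊ → ℂ^{n×n}` twice continuously differentiable and
holomorphic in `λ`, the operators `D_ρ` and `D_z` commute on `f` at every point with
`λ ≠ 0` and `λ² + ρ² ≠ 0`. -/
theorem statement0 (n : ℕ) (hn : 1 ≤ n)
    (f : ℂ × ℝ × ℝ → Matrix (Fin n) (Fin n) ℂ)
    (hf : ContDiffOn ℝ 2 f {p : ℂ × ℝ × ℝ | 0 < p.2.1})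
    (hol : ∀ p ∈ {p : ℂ × ℝ × ℝ | 0 < p.2.1},
      DifferentiableAt ℂ (fun w : ℂ => f (w, p.2)) p.1)
    (p : ℂ × ℝ × ℝ) (hp : 0 < p.2.1) (hl : p.1 ≠ 0)
    (hden : p.1 ^ 2 + (p.2.1 : ℂ) ^ 2 ≠ 0) :
    Drho (Dzop f) p = Dzop (Drho f) p :=
  statement0_general n f hf p hp hden
end

section
/- (Kernel of D consists of functions of ϖ.) Let V ⊆ ℂ × ℝ²₊ be open, avoiding {λ=0} and {λ²+ρ²=0}, and let f : V → ℂ be C¹ (holomorphic in λ) with D_ρ f = 0 and D_z f = 0 on V. Let O ⊆ ℂ × ℝ²₊ be open and let λ̂ : O → ℂ be C¹ in (ϖ₀,ρ,z) satisfying the quadratic relation λ̂² − 2(z−ϖ₀)λ̂ − ρ² = 0 with (λ̂(ϖ₀,ρ,z),ρ,z) ∈ V for all (ϖ₀,ρ,z) ∈ O. Then g(ϖ₀,ρ,z) := f(λ̂(ϖ₀,ρ,z),ρ,z) satisfies ∂_ρ g = 0 and ∂_z g = 0 on O; that is, f depends only on ϖ. -/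
/-!
Differentiating `ϖ(λ̂, x) = ϖ₀` implicitly gives `∂_μ λ̂ = −ω_μ`, so by the chain rule
`∂_μ g = ∂_μ f + ∂_μ λ̂ · ∂_λ f = D_μ f = 0`. Holomorphy in `λ` is what makes the real
derivative of `f` `ℂ`-linear in the `λ` direction, so that the complex number `∂_μ λ̂` factors
out.
-/

open Matrix

attribute [local instance] Matrix.normedAddCommGroup Matrix.normedSpace

open ContinuousLinearMap Topology

section ComplexFirstSlot

variable {E F : Type*} [NormedAddCommGroup E] [NormedSpace ℝ E]
  [NormedAddCommGroup F] [NormedSpace ℂ F]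

theorem fderiv_apply_fst_eq_smul {f : ℂ × E → F} {p : ℂ × E} (hf : DifferentiableAt ℝ f p)
    (hol : DifferentiableAt ℂ (fun w : ℂ => f (w, p.2)) p.1) (c : ℂ) :
    fderiv ℝ f p (c, 0) = c • fderiv ℝ f p (1, 0) := by
  have hreal : HasFDerivAt (fun w : ℂ => f (w, p.2)) ((fderiv ℝ f p).comp (inl ℝ ℂ E)) p.1 :=
    hf.hasFDerivAt.comp p.1 ((hasFDerivAt_id _).prodMk (hasFDerivAt_const _ _))
  have hpartial := hreal.unique (hol.hasFDerivAt.restrictScalars ℝ)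
  have happly (a : ℂ) : fderiv ℝ f p (a, 0) = fderiv ℂ (fun w : ℂ => f (w, p.2)) p.1 a :=
    congrArg (fun T : ℂ →L[ℝ] F => T a) hpartial
  rw [happly, happly, ← map_smul, smul_eq_mul, mul_one]

theorem fderiv_comp_fst_subst_apply {f : ℂ × E → F} {lam : ℂ × E → ℂ} {q : ℂ × E}
    (hf : DifferentiableAt ℝ f (lam q, q.2))
    (hol : DifferentiableAt ℂ (fun w : ℂ => f (w, q.2)) (lam q))
    (hlam : DifferentiableAt ℝ lam q) (e : E) :
    fderiv ℝ (fun w : ℂ × E => f (lam w, w.2)) q (0, e) =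
      fderiv ℝ f (lam q, q.2) (0, e) +
        fderiv ℝ lam q (0, e) • fderiv ℝ f (lam q, q.2) (1, 0) := by
  have hg : HasFDerivAt (fun w : ℂ × E => f (lam w, w.2))
      ((fderiv ℝ f (lam q, q.2)).comp ((fderiv ℝ lam q).prod (snd ℝ ℂ E))) q :=
    hf.hasFDerivAt.comp q (hlam.hasFDerivAt.prodMk hasFDerivAt_snd)
  have hsplit : ((fderiv ℝ lam q (0, e), e) : ℂ × E) = (0, e) + (fderiv ℝ lam q (0, e), 0) := by
    simp
  rw [hg.fderiv, ContinuousLinearMap.comp_apply, prod_apply, coe_snd', hsplit, map_add,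
    fderiv_apply_fst_eq_smul hf hol]

end ComplexFirstSlot

section QuadraticRoot

variable {O : Set (ℂ × ℝ × ℝ)} {lam : ℂ × ℝ × ℝ → ℂ} {q : ℂ × ℝ × ℝ}

/-- Implicit differentiation of the quadratic relation, multiplied by `2 lam` so that the
coefficient `2 (lam − (z − ϖ₀))` becomes `lam² + ρ²`. -/
theorem fderiv_root_apply_mul (hO : O ∈ 𝓝 q) (hlam : DifferentiableAt ℝ lam q)
    (hroot : ∀ w ∈ O, lam w ^ 2 - 2 * ((w.2.2 : ℂ) - w.1) * lam w - (w.2.1 : ℂ) ^ 2 = 0)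
    (v : ℂ × ℝ × ℝ) :
    fderiv ℝ lam q v * (lam q ^ 2 + (q.2.1 : ℂ) ^ 2) =
      2 * lam q * (((v.2.2 : ℂ) - v.1) * lam q + q.2.1 * v.2.1) := by
  set cρ : (ℂ × ℝ × ℝ) →L[ℝ] ℂ := Complex.ofRealCLM.comp ((fst ℝ ℝ ℝ).comp (snd ℝ ℂ (ℝ × ℝ)))
  set cz : (ℂ × ℝ × ℝ) →L[ℝ] ℂ := Complex.ofRealCLM.comp ((snd ℝ ℝ ℝ).comp (snd ℝ ℂ (ℝ × ℝ)))
  have hF := ((hlam.hasFDerivAt.pow 2).sub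
    (((cz.hasFDerivAt.sub (fst ℝ ℂ (ℝ × ℝ)).hasFDerivAt).const_mul (2 : ℂ)).mul
      hlam.hasFDerivAt)).sub (cρ.hasFDerivAt.pow 2)
  have hF0 : (fun w : ℂ × ℝ × ℝ => lam w ^ 2 - 2 * (cz w - w.1) * lam w - cρ w ^ 2) =ᶠ[𝓝 q]
      fun _ => 0 := by
    filter_upwards [hO] with w hw using hroot w hw
  have hv := congrArg (fun T : (ℂ × ℝ × ℝ) →L[ℝ] ℂ => T v)
    (hF.unique (hF0.hasFDerivAt_iff.2 (hasFDerivAt_const 0 q)))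
  simp only [Nat.add_one_sub_one, pow_one, nsmul_eq_mul, Nat.cast_ofNat, coe_fst', Pi.sub_apply,
    ContinuousLinearMap.comp_apply, coe_snd', Complex.ofRealCLM_apply, _root_.sub_apply, _root_.smul_apply,
    smul_eq_mul, _root_.add_apply, _root_.zero_apply, cz, cρ] at hv
  linear_combination lam q * hv - fderiv ℝ lam q v * hroot q (mem_of_mem_nhds hO)

theorem fderiv_root_apply_rho (hO : O ∈ 𝓝 q) (hlam : DifferentiableAt ℝ lam q)
    (hroot : ∀ w ∈ O, lam w ^ 2 - 2 * ((w.2.2 : ℂ) - w.1) * lam w - (w.2.1 : ℂ) ^ 2 = 0)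
    (hden : lam q ^ 2 + (q.2.1 : ℂ) ^ 2 ≠ 0) :
    fderiv ℝ lam q (0, 1, 0) = -omegaRho (lam q, q.2) := by
  have h := fderiv_root_apply_mul hO hlam hroot (0, 1, 0)
  simp only [mul_one, Complex.ofReal_one, Complex.ofReal_zero, sub_zero, zero_mul, zero_add] at h
  rw [omegaRho, eq_neg_iff_add_eq_zero]
  field_simp
  linear_combination h

theorem fderiv_root_apply_z (hO : O ∈ 𝓝 q) (hlam : DifferentiableAt ℝ lam q)
    (hroot : ∀ w ∈ O, lam w ^ 2 - 2 * ((w.2.2 : ℂ) - w.1) * lam w - (w.2.1 : ℂ) ^ 2 = 0)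
    (hden : lam q ^ 2 + (q.2.1 : ℂ) ^ 2 ≠ 0) :
    fderiv ℝ lam q (0, 0, 1) = -omegaZ (lam q, q.2) := by
  have h := fderiv_root_apply_mul hO hlam hroot (0, 0, 1)
  simp only [mul_zero, Complex.ofReal_one, Complex.ofReal_zero, sub_zero, add_zero] at h
  rw [omegaZ, eq_neg_iff_add_eq_zero]
  field_simp
  linear_combination h

end QuadraticRoot

theorem statement2_general
    (V : Set (ℂ × ℝ × ℝ)) (hV : IsOpen V)
    (hVgood : ∀ p ∈ V, 0 < p.2.1 ∧ p.1 ≠ 0 ∧ p.1 ^ 2 + (p.2.1 : ℂ) ^ 2 ≠ 0)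
    (f : ℂ × ℝ × ℝ → ℂ) (hf : ContDiffOn ℝ 1 f V)
    (hol : ∀ p ∈ V, DifferentiableAt ℂ (fun w : ℂ => f (w, p.2)) p.1)
    (hDρ : ∀ p ∈ V, Drho f p = 0) (hDz : ∀ p ∈ V, Dzop f p = 0)
    -- the set `O` with coordinates `(ϖ₀, ρ, z)` and the root function `λ̂`
    (O : Set (ℂ × ℝ × ℝ)) (hO : IsOpen O)
    (lam : ℂ × ℝ × ℝ → ℂ) (hlam : ContDiffOn ℝ 1 lam O)
    (hroot : ∀ q ∈ O,
      (lam q) ^ 2 - 2 * ((q.2.2 : ℂ) - q.1) * lam q - (q.2.1 : ℂ) ^ 2 = 0)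
    (hland : ∀ q ∈ O, (lam q, q.2) ∈ V) :
    ∀ q ∈ O,
      fderiv ℝ (fun w : ℂ × ℝ × ℝ => f (lam w, w.2)) q ((0 : ℂ), (1 : ℝ), (0 : ℝ)) = 0 ∧
      fderiv ℝ (fun w : ℂ × ℝ × ℝ => f (lam w, w.2)) q ((0 : ℂ), (0 : ℝ), (1 : ℝ)) = 0 := by
  intro q hq
  have hpV : (lam q, q.2) ∈ V := hland q hq
  have hden := (hVgood _ hpV).2.2
  have hOq : O ∈ 𝓝 q := hO.mem_nhds hq
  have hfq : DifferentiableAt ℝ f (lam q, q.2) :=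
    (hf.contDiffAt (hV.mem_nhds hpV)).differentiableAt one_ne_zero
  have hlamq : DifferentiableAt ℝ lam q := (hlam.contDiffAt hOq).differentiableAt one_ne_zero
  have hchain := fderiv_comp_fst_subst_apply hfq (hol _ hpV) hlamq
  rw [← Prod.mk_zero_zero] at hchain
  constructor
  · rw [hchain, fderiv_root_apply_rho hOq hlamq hroot hden, neg_smul, ← sub_eq_add_neg]
    exact hDρ _ hpV
  · rw [hchain, fderiv_root_apply_z hOq hlamq hroot hden, neg_smul, ← sub_eq_add_neg]
    exact hDz _ hpV

/-- if `f` is `C¹`, holomorphic in `λ`, and `D_ρ f = D_z f = 0` on `V`, and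
`λ̂(ϖ₀,ρ,z)` is a `C¹` root of the quadratic `λ̂² − 2(z−ϖ₀)λ̂ − ρ² = 0` landing in `V`,
then `g(ϖ₀,ρ,z) := f(λ̂(ϖ₀,ρ,z),ρ,z)` satisfies `∂_ρ g = 0` and `∂_z g = 0`; i.e. `f`
depends only on `ϖ`. -/
theorem statement2
    (V : Set (ℂ × ℝ × ℝ)) (hV : IsOpen V)
    (hVgood : ∀ p ∈ V, 0 < p.2.1 ∧ p.1 ≠ 0 ∧ p.1 ^ 2 + (p.2.1 : ℂ) ^ 2 ≠ 0)
    (f : ℂ × ℝ × ℝ → ℂ) (hf : ContDiffOn ℝ 1 f V)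
    (hol : ∀ p ∈ V, DifferentiableAt ℂ (fun w : ℂ => f (w, p.2)) p.1)
    (hDρ : ∀ p ∈ V, Drho f p = 0) (hDz : ∀ p ∈ V, Dzop f p = 0)
    -- the set `O` with coordinates `(ϖ₀, ρ, z)` and the root function `λ̂`
    (O : Set (ℂ × ℝ × ℝ)) (hO : IsOpen O) (hOpos : ∀ q ∈ O, 0 < q.2.1)
    (lam : ℂ × ℝ × ℝ → ℂ) (hlam : ContDiffOn ℝ 1 lam O)
    (hroot : ∀ q ∈ O,
      (lam q) ^ 2 - 2 * ((q.2.2 : ℂ) - q.1) * lam q - (q.2.1 : ℂ) ^ 2 = 0)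
    (hland : ∀ q ∈ O, (lam q, q.2) ∈ V) :
    ∀ q ∈ O,
      fderiv ℝ (fun w : ℂ × ℝ × ℝ => f (lam w, w.2)) q ((0 : ℂ), (1 : ℝ), (0 : ℝ)) = 0 ∧
      fderiv ℝ (fun w : ℂ × ℝ × ℝ => f (lam w, w.2)) q ((0 : ℂ), (0 : ℝ), (1 : ℝ)) = 0 :=
  statement2_general V hV hVgood f hf hol hDρ hDz O hO lam hlam hroot hland
end

section
/- The functions a(λ,x)=ρ²/(λ²+ρ²) and b(λ,x)=λ/(λ²+ρ²) satisfy, at every (λ,x) with λ ≠ 0 and λ²+ρ² ≠ 0: (i) a(0,x)=1 and b(0,x)=0; (ii) a² + ρ²b² − a = 0; (iii) Da = ρ(*Db), i.e. componentwise D_ρ a = −ρ D_z b and D_z a = ρ D_ρ b. -/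
open Matrix

attribute [local instance] Matrix.normedAddCommGroup Matrix.normedSpace

/-- `a(λ, x) = ρ²/(λ² + ρ²)`. -/
noncomputable def aF (p : ℂ × ℝ × ℝ) : ℂ :=
  (p.2.1 : ℂ) ^ 2 / (p.1 ^ 2 + (p.2.1 : ℂ) ^ 2)

/-- `b(λ, x) = λ/(λ² + ρ²)`. -/
noncomputable def bF (p : ℂ × ℝ × ℝ) : ℂ :=
  p.1 / (p.1 ^ 2 + (p.2.1 : ℂ) ^ 2)

/-!
Both `a` and `b` are rational in `λ` and `ρ` and independent of `z`, so `∂_z` drops out of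
`D_z` and only `−ω_z ∂_λ` remains. The quotient rule gives the partial derivatives of `a` and `b`;
each of `D_ρ a`, `D_z a`, `D_ρ b`, `D_z b` is then a polynomial over `(λ² + ρ²)³`, and the
identities `Da = ρ(*Db)` are read off from these closed forms.
-/

section

variable {E : Type*} [NormedAddCommGroup E] [NormedSpace ℝ E] {f g : E → ℂ} {f' g' : E →L[ℝ] ℂ} {p : E}

theorem HasFDerivAt.complex_div (hf : HasFDerivAt f f' p) (hg : HasFDerivAt g g' p) (hp : g p ≠ 0) :
    HasFDerivAt (fun y => f y / g y) ((g p ^ 2)⁻¹ • (g p • f' - f p • g')) p := by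
  have hinv := ((hasFDerivAt_inv hp).restrictScalars ℝ).comp p hg
  refine (hf.mul hinv).congr_fderiv ?_
  ext v
  simp only [Function.comp_apply, _root_.add_apply, _root_.sub_apply, _root_.smul_apply,
    ContinuousLinearMap.comp_apply, ContinuousLinearMap.coe_restrictScalars',
    ContinuousLinearMap.toSpanSingleton_apply, smul_eq_mul, mul_neg]
  field_simp
  ring

end

theorem hasFDerivAt_ofReal_rho (p : ℂ × ℝ × ℝ) :
    HasFDerivAt (fun q : ℂ × ℝ × ℝ => (q.2.1 : ℂ))
      (Complex.ofRealCLM ∘L ContinuousLinearMap.fst ℝ ℝ ℝ ∘L ContinuousLinearMap.snd ℝ ℂ (ℝ × ℝ)) p :=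
  (Complex.ofRealCLM ∘L ContinuousLinearMap.fst ℝ ℝ ℝ ∘L
    ContinuousLinearMap.snd ℝ ℂ (ℝ × ℝ)).hasFDerivAt

section

variable {l : ℂ} {x : ℝ × ℝ}

theorem fderiv_aF_apply (hden : l ^ 2 + (x.1 : ℂ) ^ 2 ≠ 0) (v : ℂ × ℝ × ℝ) :
    fderiv ℝ aF (l, x) v = 2 * x.1 * l * (l * v.2.1 - x.1 * v.1) / (l ^ 2 + x.1 ^ 2) ^ 2 := by
  have hlam := hasFDerivAt_fst (𝕜 := ℝ) (p := (l, x))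
  have hrho := hasFDerivAt_ofReal_rho (l, x)
  have ha : HasFDerivAt aF _ (l, x) :=
    (hrho.pow 2).complex_div ((hlam.pow 2).fun_add (hrho.pow 2)) hden
  rw [ha.fderiv]
  simp only [Nat.add_one_sub_one, pow_one, nsmul_eq_mul, Nat.cast_ofNat, smul_add, _root_.smul_apply,
    _root_.sub_apply, _root_.add_apply, ContinuousLinearMap.comp_apply, ContinuousLinearMap.coe_fst',
    ContinuousLinearMap.coe_snd', Complex.ofRealCLM_apply, smul_eq_mul]
  field_simp
  ring

theorem fderiv_bF_apply (hden : l ^ 2 + (x.1 : ℂ) ^ 2 ≠ 0) (v : ℂ × ℝ × ℝ) :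
    fderiv ℝ bF (l, x) v = ((x.1 ^ 2 - l ^ 2) * v.1 - 2 * x.1 * l * v.2.1) / (l ^ 2 + x.1 ^ 2) ^ 2 := by
  have hlam := hasFDerivAt_fst (𝕜 := ℝ) (p := (l, x))
  have hrho := hasFDerivAt_ofReal_rho (l, x)
  have hb : HasFDerivAt bF _ (l, x) :=
    hlam.complex_div ((hlam.pow 2).fun_add (hrho.pow 2)) hden
  rw [hb.fderiv]
  simp only [Nat.add_one_sub_one, pow_one, nsmul_eq_mul, Nat.cast_ofNat, smul_add, _root_.smul_apply,
    _root_.sub_apply, _root_.add_apply, ContinuousLinearMap.comp_apply, ContinuousLinearMap.coe_fst',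
    ContinuousLinearMap.coe_snd', Complex.ofRealCLM_apply, smul_eq_mul]
  field_simp
  ring

theorem Drho_aF (hden : l ^ 2 + (x.1 : ℂ) ^ 2 ≠ 0) :
    Drho aF (l, x) = 2 * x.1 * l ^ 2 * (l ^ 2 - x.1 ^ 2) / (l ^ 2 + x.1 ^ 2) ^ 3 := by
  simp only [Drho, omegaRho, fderiv_aF_apply hden, smul_eq_mul]
  push_cast
  field_simp
  ring

theorem Dzop_aF (hden : l ^ 2 + (x.1 : ℂ) ^ 2 ≠ 0) :
    Dzop aF (l, x) = -4 * x.1 ^ 2 * l ^ 3 / (l ^ 2 + x.1 ^ 2) ^ 3 := by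
  simp only [Dzop, omegaZ, fderiv_aF_apply hden, smul_eq_mul]
  push_cast
  field_simp
  ring

theorem Drho_bF (hden : l ^ 2 + (x.1 : ℂ) ^ 2 ≠ 0) :
    Drho bF (l, x) = -4 * x.1 * l ^ 3 / (l ^ 2 + x.1 ^ 2) ^ 3 := by
  simp only [Drho, omegaRho, fderiv_bF_apply hden, smul_eq_mul]
  push_cast
  field_simp
  ring

theorem Dzop_bF (hden : l ^ 2 + (x.1 : ℂ) ^ 2 ≠ 0) :
    Dzop bF (l, x) = 2 * l ^ 2 * (x.1 ^ 2 - l ^ 2) / (l ^ 2 + x.1 ^ 2) ^ 3 := by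
  simp only [Dzop, omegaZ, fderiv_bF_apply hden, smul_eq_mul]
  push_cast
  field_simp
  ring

end

theorem statement4_general (l : ℂ) (x : ℝ × ℝ) (hρ : 0 < x.1)
    (hden : l ^ 2 + (x.1 : ℂ) ^ 2 ≠ 0) :
    aF ((0 : ℂ), x) = 1 ∧ bF ((0 : ℂ), x) = 0 ∧
    aF (l, x) ^ 2 + (x.1 : ℂ) ^ 2 * bF (l, x) ^ 2 - aF (l, x) = 0 ∧
    Drho aF (l, x) = -(x.1 : ℂ) * Dzop bF (l, x) ∧
    Dzop aF (l, x) = (x.1 : ℂ) * Drho bF (l, x) := by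
  have hx : (x.1 : ℂ) ≠ 0 := Complex.ofReal_ne_zero.mpr hρ.ne'
  refine ⟨?_, by simp [bF], ?_, ?_, ?_⟩
  · simp [aF, hx]
  · simp only [aF, bF]
    field_simp
    ring
  · rw [Drho_aF hden, Dzop_bF hden]
    ring
  · rw [Dzop_aF hden, Drho_bF hden]
    ring

/-- the functions `a = ρ²/(λ²+ρ²)` and `b = λ/(λ²+ρ²)` satisfy
(i) `a(0,x) = 1`, `b(0,x) = 0`; (ii) `a² + ρ²b² − a = 0`;
(iii) `Da = ρ(*Db)`, i.e. `D_ρ a = −ρ D_z b` and `D_z a = ρ D_ρ b`. -/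
theorem statement4 (l : ℂ) (x : ℝ × ℝ) (hρ : 0 < x.1) (hl : l ≠ 0)
    (hden : l ^ 2 + (x.1 : ℂ) ^ 2 ≠ 0) :
    aF ((0 : ℂ), x) = 1 ∧ bF ((0 : ℂ), x) = 0 ∧
    aF (l, x) ^ 2 + (x.1 : ℂ) ^ 2 * bF (l, x) ^ 2 - aF (l, x) = 0 ∧
    Drho aF (l, x) = -(x.1 : ℂ) * Dzop bF (l, x) ∧
    Dzop aF (l, x) = (x.1 : ℂ) * Drho bF (l, x) :=
  statement4_general l x hρ hden
end

section
/- (Involutive symmetry of solutions of the Lax system.) Let Γ ∈ ℂ^{n×n} satisfy Γ² = I. Let q : U → GL(n,ℂ) be C¹ on open U ⊆ ℝ²₊ with qΓqΓ = I, set W_μ := −(∂_μ q)q⁻¹, and define Ω_ρ = aW_ρ − bρW_z, Ω_z = aW_z + bρW_ρ with a(λ,x)=ρ²/(λ²+ρ²), b(λ,x)=λ/(λ²+ρ²). Let V ⊆ ℂ × ℝ²₊ be open above U, avoiding {λ=0} and {λ²+ρ²=0}, invariant under (λ,x) ↦ (−ρ²/λ, x), and let Ψ : V → ℂ^{n×n}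 be C¹ (holomorphic in λ) with D_μΨ = −Ω_μΨ. Then the function Ψ'(λ,x) := q(x)·Γ·Ψ(−ρ²/λ, x)·Γ satisfies the same system: D_μΨ' = −Ω_μΨ' on V. (In particular D commutes with precomposition by T_x(λ)=−ρ²/λ: D_μ[Ψ(T_x(λ),x)] = (D_μΨ)(T_x(λ),x).) -/
open Matrix

attribute [local instance] Matrix.normedAddCommGroup Matrix.normedSpace

/-!
Write `T(λ, x) = (-ρ²/λ, x)` and `P = qΓ`. Since `Ψ` is holomorphic in `λ`, the chain rule through
`T` only produces `∂_λΨ`-terms, and the identities `ω_ρ ∘ T = -ω_ρ`, `ω_z ∘ T = (ρ/λ)² ω_z` make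
`D_μ` commute with precomposition by `T`; moreover `a ∘ T = 1 - a` and `(bρ) ∘ T = -bρ`.
Differentiating `P² = 1` and using `∂_μ q = -W_μ q` shows that `P` anticommutes with `W_ρ` and
`W_z`. For `Ψ' = P (Ψ ∘ T) Γ` the Leibniz rule gives `D_μΨ' = -(W_μ P + P (Ω_μ ∘ T)) (Ψ ∘ T) Γ`,
and by the anticommutation `W_μ P + P (Ω_μ ∘ T) = Ω_μ P`.
-/

open Topology

theorem mul_eq_neg_mul_of_mul_self_eq_one {R : Type*} [Ring R] {P W : R} (hP : P * P = 1)
    (h : P * W * P + W * P * P = 0) : P * W = -(W * P) := by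
  have hPWP : P * W * P = -W := by rwa [mul_assoc W, hP, mul_one, add_eq_zero_iff_eq_neg] at h
  calc P * W = P * W * P * P := by rw [mul_assoc _ P P, hP, mul_one]
    _ = -(W * P) := by rw [hPWP, neg_mul]

theorem neg_mul_add_mul_neg_eq_of_anticomm {A : Type*} [Ring A] [Algebra ℂ A] {Q G X Y N : A}
    {a a' c c' : ℂ} (ha : a' = 1 - a) (hc : c' = -c)
    (hX : Q * G * X = -(X * (Q * G))) (hY : Q * G * Y = -(Y * (Q * G))) :
    -(X * Q) * G * N * G + Q * G * -((a' • X + c' • Y) * N) * G =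
      -((a • X + c • Y) * (Q * G * N * G)) := by
  have hX' : ∀ Z, Q * (G * (X * Z)) = -(X * (Q * (G * Z))) := fun Z => by
    simp only [← mul_assoc, hX, neg_mul]
  have hY' : ∀ Z, Q * (G * (Y * Z)) = -(Y * (Q * (G * Z))) := fun Z => by
    simp only [← mul_assoc, hY, neg_mul]
  subst ha hc
  simp only [mul_add, add_mul, smul_mul_assoc, mul_smul_comm, mul_assoc, neg_mul, mul_neg, hX',
    hY']
  module

theorem Matrix.eq_neg_mul_of_eq_neg_mul_inv {m α : Type*} [Fintype m] [DecidableEq m]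
    [CommRing α] {A D W : Matrix m m α} (hA : IsUnit A) (h : W = -D * A⁻¹) : D = -(W * A) := by
  rw [h, mul_assoc, A.nonsing_inv_mul ((A.isUnit_iff_isUnit_det).mp hA), mul_one, neg_neg]

theorem fderiv_apply_prod_eq_add_smul {X E : Type*} [NormedAddCommGroup X] [NormedSpace ℝ X]
    [NormedAddCommGroup E] [NormedSpace ℂ E] {f : ℂ × X → E} {p : ℂ × X}
    (hf : DifferentiableAt ℝ f p) (hhol : DifferentiableAt ℂ (fun w => f (w, p.2)) p.1)
    (c : ℂ) (v : X) :
    fderiv ℝ f p (c, v) = fderiv ℝ f p (0, v) + c • fderiv ℝ f p (1, 0) := by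
  have hslice : HasFDerivAt (fun w => f (w, p.2))
      ((fderiv ℝ f p).comp (ContinuousLinearMap.inl ℝ ℂ X)) p.1 :=
    hf.hasFDerivAt.comp p.1 (hasFDerivAt_prodMk_left p.1 p.2)
  have hfst : ∀ c : ℂ, fderiv ℝ f p (c, 0) = fderiv ℂ (fun w => f (w, p.2)) p.1 c :=
    DFunLike.congr_fun (hslice.unique (hhol.hasFDerivAt.restrictScalars ℝ))
  have hsmul : fderiv ℝ f p (c, 0) = c • fderiv ℝ f p (1, 0) := by
    rw [hfst, hfst, ← map_smul, smul_eq_mul, mul_one]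
  rw [← hsmul, ← map_add, Prod.mk_add_mk, zero_add, add_zero]

section MatrixCalculus

variable {m : Type*} [Fintype m] [DecidableEq m]
  {X : Type*} [NormedAddCommGroup X] [NormedSpace ℝ X]

/- The entrywise sup norm on matrices is not submultiplicative, so the product rule for normed
algebras does not apply; matrix multiplication is still a continuous bilinear map. -/
noncomputable def matrixMulCLM : Matrix m m ℂ →L[ℝ] Matrix m m ℂ →L[ℝ] Matrix m m ℂ :=
  LinearMap.toContinuousLinearMap
    (LinearMap.toContinuousLinearMap.toLinearMap ∘ₗ LinearMap.mul ℝ (Matrix m m ℂ))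

theorem DifferentiableAt.matrix_mul {f g : X → Matrix m m ℂ} {x : X}
    (hf : DifferentiableAt ℝ f x) (hg : DifferentiableAt ℝ g x) :
    DifferentiableAt ℝ (fun y => f y * g y) x :=
  (matrixMulCLM.hasFDerivAt_of_bilinear hf.hasFDerivAt hg.hasFDerivAt).differentiableAt

theorem fderiv_matrix_mul_apply {f g : X → Matrix m m ℂ} {x : X}
    (hf : DifferentiableAt ℝ f x) (hg : DifferentiableAt ℝ g x) (v : X) :
    fderiv ℝ (fun y => f y * g y) x v = fderiv ℝ f x v * g x + f x * fderiv ℝ g x v := by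
  have h : fderiv ℝ (fun y => f y * g y) x = _ :=
    (matrixMulCLM.hasFDerivAt_of_bilinear hf.hasFDerivAt hg.hasFDerivAt).fderiv
  exact (DFunLike.congr_fun h v).trans (add_comm _ _)

theorem fderiv_mul_mul_mul_apply {f g : X → Matrix m m ℂ} {x : X} (hf : DifferentiableAt ℝ f x)
    (hg : DifferentiableAt ℝ g x) (B C : Matrix m m ℂ) (v : X) :
    fderiv ℝ (fun y => f y * B * g y * C) x v =
      (fderiv ℝ f x v * B * g x + f x * B * fderiv ℝ g x v) * C := by
  have hfB := hf.matrix_mul (differentiableAt_const B)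
  rw [fderiv_matrix_mul_apply (hfB.matrix_mul hg) (differentiableAt_const C),
    fderiv_matrix_mul_apply hfB hg, fderiv_matrix_mul_apply hf (differentiableAt_const B)]
  simp

theorem anticomm_of_eventually_mul_mul_mul_eq_one {q : X → Matrix m m ℂ} {Γ W : Matrix m m ℂ}
    {x : X} (hq : DifferentiableAt ℝ q x) (hc : ∀ᶠ y in 𝓝 x, q y * Γ * q y * Γ = 1) {v : X}
    (hW : fderiv ℝ q x v = -(W * q x)) : q x * Γ * W = -(W * (q x * Γ)) := by
  have hP : q x * Γ * (q x * Γ) = 1 := by rw [← mul_assoc]; exact hc.self_of_nhds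
  have h : fderiv ℝ (fun y => q y * Γ * q y * Γ) x v = 0 := by
    rw [Filter.EventuallyEq.fderiv_eq (f := fun _ => 1) hc, fderiv_const_apply]
    rfl
  rw [fderiv_mul_mul_mul_apply hq hq, hW] at h
  refine mul_eq_neg_mul_of_mul_self_eq_one hP ?_
  rw [← neg_eq_zero, ← h]
  noncomm_ring

end MatrixCalculus

/- An `abbrev`, so that rewriting sees through it to the pair `(-ρ²/λ, x)` written out in the
statement. -/
noncomputable abbrev spectralInv (p : ℂ × ℝ × ℝ) : ℂ × ℝ × ℝ := (-(p.2.1 : ℂ) ^ 2 / p.1, p.2)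

section SpectralInv

variable {p : ℂ × ℝ × ℝ}

theorem hasFDerivAt_spectralInv (hl : p.1 ≠ 0) :
    HasFDerivAt spectralInv
      ((((p.2.1 : ℂ) / p.1) ^ 2 • ContinuousLinearMap.fst ℝ ℂ (ℝ × ℝ) -
        (2 * (p.2.1 : ℂ) / p.1) • (Complex.ofRealCLM.comp
          ((ContinuousLinearMap.fst ℝ ℝ ℝ).comp (ContinuousLinearMap.snd ℝ ℂ (ℝ × ℝ))))).prod
        (ContinuousLinearMap.snd ℝ ℂ (ℝ × ℝ))) p := by
  refine HasFDerivAt.prodMk ?_ hasFDerivAt_snd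
  have hρ := (Complex.ofRealCLM.comp ((ContinuousLinearMap.fst ℝ ℝ ℝ).comp
    (ContinuousLinearMap.snd ℝ ℂ (ℝ × ℝ)))).hasFDerivAt (x := p)
  have hinv := ((hasFDerivAt_inv hl).restrictScalars ℝ).comp p hasFDerivAt_fst
  have h : HasFDerivAt (fun w : ℂ × ℝ × ℝ => -(w.2.1 : ℂ) ^ 2 / w.1) _ p :=
    (hρ.pow 2).neg.mul hinv
  refine h.congr_fderiv ?_
  ext w <;> simp <;> field_simp

theorem fderiv_comp_spectralInv_apply {E : Type*} [NormedAddCommGroup E] [NormedSpace ℝ E]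
    {Ψ : ℂ × ℝ × ℝ → E} (hl : p.1 ≠ 0) (hΨ : DifferentiableAt ℝ Ψ (spectralInv p))
    (v : ℂ × ℝ × ℝ) :
    fderiv ℝ (fun w => Ψ (spectralInv w)) p v =
      fderiv ℝ Ψ (spectralInv p)
        ((((p.2.1 : ℂ) / p.1) ^ 2 * v.1 - 2 * (p.2.1 : ℂ) / p.1 * v.2.1, v.2)) := by
  have h : fderiv ℝ (fun w => Ψ (spectralInv w)) p = _ :=
    (hΨ.hasFDerivAt.comp p (hasFDerivAt_spectralInv hl)).fderiv
  simp [h]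

theorem spectralInv_fst_sq_add_sq (hl : p.1 ≠ 0) :
    (spectralInv p).1 ^ 2 + (p.2.1 : ℂ) ^ 2 =
      ((p.2.1 : ℂ) / p.1) ^ 2 * (p.1 ^ 2 + (p.2.1 : ℂ) ^ 2) := by
  field_simp
  ring

theorem omegaRho_spectralInv (hl : p.1 ≠ 0) : omegaRho (spectralInv p) = -omegaRho p := by
  rw [omegaRho, omegaRho, spectralInv_fst_sq_add_sq hl]
  field_simp

theorem omegaZ_spectralInv (hl : p.1 ≠ 0) :
    omegaZ (spectralInv p) = omegaZ p * ((p.2.1 : ℂ) / p.1) ^ 2 := by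
  rw [omegaZ, omegaZ, spectralInv_fst_sq_add_sq hl]
  field_simp

theorem aF_spectralInv (hl : p.1 ≠ 0) (hρ : (p.2.1 : ℂ) ≠ 0)
    (hden : p.1 ^ 2 + (p.2.1 : ℂ) ^ 2 ≠ 0) : aF (spectralInv p) = 1 - aF p := by
  rw [aF, aF, spectralInv_fst_sq_add_sq hl]
  field_simp
  ring

theorem bF_spectralInv_mul (hl : p.1 ≠ 0) :
    bF (spectralInv p) * p.2.1 = -(bF p * p.2.1) := by
  rw [bF, bF, spectralInv_fst_sq_add_sq hl]
  field_simp

end SpectralInv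

section LaxOperators

variable {p : ℂ × ℝ × ℝ}

section Comp

variable {E : Type*} [NormedAddCommGroup E] [NormedSpace ℂ E] {Ψ : ℂ × ℝ × ℝ → E}

theorem Drho_comp_spectralInv (hl : p.1 ≠ 0) (hden : p.1 ^ 2 + (p.2.1 : ℂ) ^ 2 ≠ 0)
    (hΨ : DifferentiableAt ℝ Ψ (spectralInv p))
    (hhol : DifferentiableAt ℂ (fun w => Ψ (w, (spectralInv p).2)) (spectralInv p).1) :
    Drho (fun w => Ψ (spectralInv w)) p = Drho Ψ (spectralInv p) := by
  simp only [Drho, fderiv_comp_spectralInv_apply hl hΨ, omegaRho_spectralInv hl]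
  rw [fderiv_apply_prod_eq_add_smul hΨ hhol, fderiv_apply_prod_eq_add_smul hΨ hhol (_ - _)]
  have hω : -(2 * (p.2.1 : ℂ) / p.1) - omegaRho p * ((p.2.1 : ℂ) / p.1) ^ 2 = omegaRho p := by
    rw [omegaRho]
    field_simp
    ring
  simp only [Prod.mk_zero_zero, map_zero, zero_add, Complex.ofReal_one, Complex.ofReal_zero,
    mul_zero, mul_one, zero_sub, sub_zero]
  linear_combination (norm := module) hω • fderiv ℝ Ψ (spectralInv p) (1, 0)

theorem Dzop_comp_spectralInv (hl : p.1 ≠ 0) (hΨ : DifferentiableAt ℝ Ψ (spectralInv p))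
    (hhol : DifferentiableAt ℂ (fun w => Ψ (w, (spectralInv p).2)) (spectralInv p).1) :
    Dzop (fun w => Ψ (spectralInv w)) p = Dzop Ψ (spectralInv p) := by
  simp only [Dzop, fderiv_comp_spectralInv_apply hl hΨ, omegaZ_spectralInv hl]
  rw [fderiv_apply_prod_eq_add_smul hΨ hhol, fderiv_apply_prod_eq_add_smul hΨ hhol (_ - _)]
  simp only [Prod.mk_zero_zero, map_zero, zero_add, Complex.ofReal_zero, mul_zero, mul_one,
    sub_zero, zero_smul, add_zero]
  module

end Comp

section Mul

variable {m : Type*} [Fintype m] [DecidableEq m] {q : ℝ × ℝ → Matrix m m ℂ}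
  {F : ℂ × ℝ × ℝ → Matrix m m ℂ}

/- `Drho` makes `Matrix m m ℂ` a real space through `ℂ`, which agrees with
`Matrix.normedSpace ℝ` only after unfolding; hence `erw`. -/
theorem Drho_mul_mul_mul (hq : DifferentiableAt ℝ q p.2) (hF : DifferentiableAt ℝ F p)
    (B C : Matrix m m ℂ) :
    Drho (fun w => q w.2 * B * F w * C) p =
      fderiv ℝ q p.2 (1, 0) * B * F p * C + q p.2 * B * Drho F p * C := by
  have hq' := hq.hasFDerivAt.comp p hasFDerivAt_snd
  simp only [Drho]
  erw [fderiv_mul_mul_mul_apply hq'.differentiableAt hF,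
    fderiv_mul_mul_mul_apply hq'.differentiableAt hF, hq'.fderiv, Prod.mk_zero_zero,
    ContinuousLinearMap.map_zero]
  simp only [zero_mul, zero_add, mul_sub, sub_mul, Matrix.mul_smul, Matrix.smul_mul, add_mul]
  abel

theorem Dzop_mul_mul_mul (hq : DifferentiableAt ℝ q p.2) (hF : DifferentiableAt ℝ F p)
    (B C : Matrix m m ℂ) :
    Dzop (fun w => q w.2 * B * F w * C) p =
      fderiv ℝ q p.2 (0, 1) * B * F p * C + q p.2 * B * Dzop F p * C := by
  have hq' := hq.hasFDerivAt.comp p hasFDerivAt_snd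
  simp only [Dzop]
  erw [fderiv_mul_mul_mul_apply hq'.differentiableAt hF,
    fderiv_mul_mul_mul_apply hq'.differentiableAt hF, hq'.fderiv, Prod.mk_zero_zero,
    ContinuousLinearMap.map_zero]
  simp only [zero_mul, zero_add, mul_sub, sub_mul, Matrix.mul_smul, Matrix.smul_mul, add_mul]
  abel

end Mul

end LaxOperators

theorem statement9_general (n : ℕ)
    (Γ : Matrix (Fin n) (Fin n) ℂ)
    (U : Set (ℝ × ℝ)) (hU : IsOpen U)
    (q : ℝ × ℝ → Matrix (Fin n) (Fin n) ℂ)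
    (hq : ContDiffOn ℝ 1 q U)
    (hqinv : ∀ x ∈ U, IsUnit (q x))
    (hconstraint : ∀ x ∈ U, q x * Γ * q x * Γ = 1)
    (Wρ Wz : ℝ × ℝ → Matrix (Fin n) (Fin n) ℂ)
    (hWρ : ∀ x : ℝ × ℝ, Wρ x = -(fderiv ℝ q x ((1 : ℝ), (0 : ℝ))) * (q x)⁻¹)
    (hWz : ∀ x : ℝ × ℝ, Wz x = -(fderiv ℝ q x ((0 : ℝ), (1 : ℝ))) * (q x)⁻¹)
    (Ωρ Ωz : ℂ × ℝ × ℝ → Matrix (Fin n) (Fin n) ℂ)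
    (hΩρ : ∀ p : ℂ × ℝ × ℝ, Ωρ p = aF p • Wρ p.2 - (bF p * (p.2.1 : ℂ)) • Wz p.2)
    (hΩz : ∀ p : ℂ × ℝ × ℝ, Ωz p = aF p • Wz p.2 + (bF p * (p.2.1 : ℂ)) • Wρ p.2)
    (V : Set (ℂ × ℝ × ℝ)) (hV : IsOpen V)
    (hVU : ∀ p ∈ V, p.2 ∈ U)
    (hVgood : ∀ p ∈ V, 0 < p.2.1 ∧ p.1 ≠ 0 ∧ p.1 ^ 2 + (p.2.1 : ℂ) ^ 2 ≠ 0)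
    (hVinv : ∀ p ∈ V, ((-(p.2.1 : ℂ) ^ 2 / p.1, p.2) : ℂ × ℝ × ℝ) ∈ V)
    (Ψ : ℂ × ℝ × ℝ → Matrix (Fin n) (Fin n) ℂ)
    (hΨ : ContDiffOn ℝ 1 Ψ V)
    (hΨhol : ∀ p ∈ V, DifferentiableAt ℂ (fun w : ℂ => Ψ (w, p.2)) p.1)
    (hlaxρ : ∀ p ∈ V, Drho Ψ p = -(Ωρ p * Ψ p))
    (hlaxz : ∀ p ∈ V, Dzop Ψ p = -(Ωz p * Ψ p)) :
    ∀ p ∈ V,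
      Drho (fun w : ℂ × ℝ × ℝ => q w.2 * Γ * Ψ (-(w.2.1 : ℂ) ^ 2 / w.1, w.2) * Γ) p =
        -(Ωρ p * (q p.2 * Γ * Ψ (-(p.2.1 : ℂ) ^ 2 / p.1, p.2) * Γ)) ∧
      Dzop (fun w : ℂ × ℝ × ℝ => q w.2 * Γ * Ψ (-(w.2.1 : ℂ) ^ 2 / w.1, w.2) * Γ) p =
        -(Ωz p * (q p.2 * Γ * Ψ (-(p.2.1 : ℂ) ^ 2 / p.1, p.2) * Γ)) := by
  intro p hp
  obtain ⟨hρpos, hl, hden⟩ := hVgood p hp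
  have hρ : (p.2.1 : ℂ) ≠ 0 := Complex.ofReal_ne_zero.mpr hρpos.ne'
  have hTp : spectralInv p ∈ V := hVinv p hp
  have hx : p.2 ∈ U := hVU p hp
  have hqd : DifferentiableAt ℝ q p.2 :=
    (hq.differentiableOn one_ne_zero).differentiableAt (hU.mem_nhds hx)
  have hΨd : DifferentiableAt ℝ Ψ (spectralInv p) :=
    (hΨ.differentiableOn one_ne_zero).differentiableAt (hV.mem_nhds hTp)
  have hFd : DifferentiableAt ℝ (fun w => Ψ (spectralInv w)) p :=
    hΨd.comp p (hasFDerivAt_spectralInv hl).differentiableAt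
  have hcon : ∀ᶠ y in 𝓝 p.2, q y * Γ * q y * Γ = 1 :=
    Filter.eventually_of_mem (hU.mem_nhds hx) hconstraint
  have hdρ := Matrix.eq_neg_mul_of_eq_neg_mul_inv (hqinv _ hx) (hWρ p.2)
  have hdz := Matrix.eq_neg_mul_of_eq_neg_mul_inv (hqinv _ hx) (hWz p.2)
  have hantiρ := anticomm_of_eventually_mul_mul_mul_eq_one hqd hcon hdρ
  have hantiz := anticomm_of_eventually_mul_mul_mul_eq_one hqd hcon hdz
  have ha := aF_spectralInv hl hρ hden
  have hb := bF_spectralInv_mul hl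
  constructor
  · rw [Drho_mul_mul_mul hqd hFd, Drho_comp_spectralInv hl hden hΨd (hΨhol _ hTp),
      hlaxρ _ hTp, hdρ, hΩρ, hΩρ, sub_eq_add_neg, sub_eq_add_neg, ← neg_smul, ← neg_smul]
    exact neg_mul_add_mul_neg_eq_of_anticomm ha (by rw [hb]) hantiρ hantiz
  · rw [Dzop_mul_mul_mul hqd hFd, Dzop_comp_spectralInv hl hΨd (hΨhol _ hTp),
      hlaxz _ hTp, hdz, hΩz, hΩz]
    exact neg_mul_add_mul_neg_eq_of_anticomm ha hb hantiz hantiρ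

/-- involutive symmetry of solutions of the Lax system: if `q` satisfies
`qΓqΓ = I`, `W_μ = −(∂_μq)q⁻¹`, `Ω_ρ = aW_ρ − bρW_z`, `Ω_z = aW_z + bρW_ρ`, and
`Ψ` solves `D_μΨ = −Ω_μΨ` on a suitable set `V` invariant under `(λ,x) ↦ (−ρ²/λ, x)`,
then `Ψ'(λ,x) := q(x)ΓΨ(−ρ²/λ,x)Γ` solves the same system on `V`. -/
theorem statement9 (n : ℕ) (hn : 1 ≤ n)
    (Γ : Matrix (Fin n) (Fin n) ℂ) (hΓ2 : Γ * Γ = 1)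
    (U : Set (ℝ × ℝ)) (hU : IsOpen U) (hUpos : ∀ x ∈ U, 0 < x.1)
    (q : ℝ × ℝ → Matrix (Fin n) (Fin n) ℂ)
    (hq : ContDiffOn ℝ 1 q U)
    (hqinv : ∀ x ∈ U, IsUnit (q x))
    (hconstraint : ∀ x ∈ U, q x * Γ * q x * Γ = 1)
    (Wρ Wz : ℝ × ℝ → Matrix (Fin n) (Fin n) ℂ)
    (hWρ : ∀ x : ℝ × ℝ, Wρ x = -(fderiv ℝ q x ((1 : ℝ), (0 : ℝ))) * (q x)⁻¹)
    (hWz : ∀ x : ℝ × ℝ, Wz x = -(fderiv ℝ q x ((0 : ℝ), (1 : ℝ))) * (q x)⁻¹)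
    (Ωρ Ωz : ℂ × ℝ × ℝ → Matrix (Fin n) (Fin n) ℂ)
    (hΩρ : ∀ p : ℂ × ℝ × ℝ, Ωρ p = aF p • Wρ p.2 - (bF p * (p.2.1 : ℂ)) • Wz p.2)
    (hΩz : ∀ p : ℂ × ℝ × ℝ, Ωz p = aF p • Wz p.2 + (bF p * (p.2.1 : ℂ)) • Wρ p.2)
    (V : Set (ℂ × ℝ × ℝ)) (hV : IsOpen V)
    (hVU : ∀ p ∈ V, p.2 ∈ U)
    (hVgood : ∀ p ∈ V, 0 < p.2.1 ∧ p.1 ≠ 0 ∧ p.1 ^ 2 + (p.2.1 : ℂ) ^ 2 ≠ 0)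
    (hVinv : ∀ p ∈ V, ((-(p.2.1 : ℂ) ^ 2 / p.1, p.2) : ℂ × ℝ × ℝ) ∈ V)
    (Ψ : ℂ × ℝ × ℝ → Matrix (Fin n) (Fin n) ℂ)
    (hΨ : ContDiffOn ℝ 1 Ψ V)
    (hΨhol : ∀ p ∈ V, DifferentiableAt ℂ (fun w : ℂ => Ψ (w, p.2)) p.1)
    (hlaxρ : ∀ p ∈ V, Drho Ψ p = -(Ωρ p * Ψ p))
    (hlaxz : ∀ p ∈ V, Dzop Ψ p = -(Ωz p * Ψ p)) :
    ∀ p ∈ V,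
      Drho (fun w : ℂ × ℝ × ℝ => q w.2 * Γ * Ψ (-(w.2.1 : ℂ) ^ 2 / w.1, w.2) * Γ) p =
        -(Ωρ p * (q p.2 * Γ * Ψ (-(p.2.1 : ℂ) ^ 2 / p.1, p.2) * Γ)) ∧
      Dzop (fun w : ℂ × ℝ × ℝ => q w.2 * Γ * Ψ (-(w.2.1 : ℂ) ^ 2 / w.1, w.2) * Γ) p =
        -(Ωz p * (q p.2 * Γ * Ψ (-(p.2.1 : ℂ) ^ 2 / p.1, p.2) * Γ)) :=
  statement9_general n Γ U hU q hq hqinv hconstraint Wρ Wz hWρ hWz Ωρ Ωz hΩρ hΩz V hV hVU hVgood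
    hVinv Ψ hΨ hΨhol hlaxρ hlaxz
end

section
/- (Invertibility of the dressing matrix near infinity.) Let n, N ≥ 1, let Γ ∈ ℂ^{n×n} be Hermitian with Γ² = I, and let ϖ_k = z_k + i s_k with s_k > 0, k = 1,…,N, be distinct. For x = (ρ,z) with ρ > 0 and, for each k, z ≠ z_k or ρ > s_k, let (r_k, θ_k) with r_k > 0, θ_k ∈ (0,π) be the elliptical coordinates determined by ρ = √(r_k²+s_k²)·sin θ_k and z = z_k + r_k·cos θ_k, and set λ_k(x) = (r_k − i s_k)(cos θ_k + 1), λ_{N+k}(x) = (r_k + i s_k)(cos θ_k − 1). Let v₁,…,v_N ∈ ℂⁿ satisfy Σ_{j≠k} |v_k* Γ v_j| < (1/2)|v_k* Γ v_k| for all k = 1,…,N, and set v_{N+j} = Γ v_j. Suppose S_{ij} : ℝ²₊ → ℂ^{n×n} (i,j = 1,…,2N) satisfy S_{ij}(x) → Γ as |x| → ∞. Then there exists R > 0 such that for all x with |x| > R, the elliptical coordinates are defined and the 2N×2N matrix A(x) with entries a_{ij} = (v_i* S_{ij}(x) v_j)/(λ_i(x) − conj(λ_j(x))) is strictly diagonally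 dominant (Σ_{j≠i} |a_{ij}| < |a_{ii}| for every i), and hence invertible. -/
/-!
Write `λ_i = e_i - i m_i`. In elliptical coordinates `m_k = s_k (1 + cos θ_k)` and
`m_{N+k} = s_k (1 - cos θ_k)`, both positive. Multiplying row `i` by `|λ_i - conj λ_i| = 2 m_i`
turns the diagonal entry into `|v_i* S_ii v_i|` and multiplies `|v_i* S_ij v_j|` by the weight
`2 m_i / |λ_i - conj λ_j| ≤ 2 m_i / (m_i + m_j) ≤ 2`. For `i`, `j` in different halves,
`|Re (λ_i - λ_j)| ≥ r_a + r_b - |z_a - z_b| → ∞` while `m_i ≤ 2 s_i`, so those weights tend to `0`.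
Since `S_ij → Γ` and `(Γ v_a)* Γ (Γ v_b) = v_a* Γ v_b`, each scaled off-diagonal row sum tends to
at most `2 Σ_{j ≠ k} |v_k* Γ v_j|`, which is smaller than the limit `|v_k* Γ v_k|` of the
diagonal entry.
-/

open Matrix

attribute [local instance] Matrix.normedAddCommGroup Matrix.normedSpace


open Filter Topology ComplexConjugate Real

/-- `r²` is the positive root of `t² - (ρ² + w² - s²) t - s² w²` (with `ρ = x.1`, `w = x.2 - z`),
so that `x` lies on the ellipse `ρ² / (r² + s²) + w² / r² = 1`, whose foci are `(±s, z)`. -/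
noncomputable def ellipticRadius (z s : ℝ) (x : ℝ × ℝ) : ℝ :=
  √((x.1 ^ 2 + (x.2 - z) ^ 2 - s ^ 2 +
    √((x.1 ^ 2 + (x.2 - z) ^ 2 - s ^ 2) ^ 2 + 4 * s ^ 2 * (x.2 - z) ^ 2)) / 2)

noncomputable def ellipticAngle (z s : ℝ) (x : ℝ × ℝ) : ℝ :=
  arccos ((x.2 - z) / ellipticRadius z s x)

def IsEllipticCoords (z s : ℝ) (x : ℝ × ℝ) (r θ : ℝ) : Prop :=
  0 < r ∧ θ ∈ Set.Ioo 0 π ∧ x.1 = √(r ^ 2 + s ^ 2) * sin θ ∧ x.2 = z + r * cos θ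

section EllipticCoords

variable {z s : ℝ} {x : ℝ × ℝ}

lemma abs_le_sqrt_sq_add {B c : ℝ} (hc : 0 ≤ c) : |B| ≤ √(B ^ 2 + c) :=
  abs_le_sqrt (le_add_of_nonneg_right hc)

lemma ellipticRadius_nonneg : 0 ≤ ellipticRadius z s x := sqrt_nonneg _

lemma sqrt_le_ellipticRadius : √(x.1 ^ 2 + (x.2 - z) ^ 2 - s ^ 2) ≤ ellipticRadius z s x := by
  refine sqrt_le_sqrt ?_
  have := (le_abs_self _).trans (abs_le_sqrt_sq_add (B := x.1 ^ 2 + (x.2 - z) ^ 2 - s ^ 2)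
    (by positivity : 0 ≤ 4 * s ^ 2 * (x.2 - z) ^ 2))
  linarith

lemma ellipticRadius_sq_sub_mul :
    (ellipticRadius z s x ^ 2 - (x.2 - z) ^ 2) * (ellipticRadius z s x ^ 2 + s ^ 2) =
      x.1 ^ 2 * ellipticRadius z s x ^ 2 := by
  set B := x.1 ^ 2 + (x.2 - z) ^ 2 - s ^ 2
  set D := √(B ^ 2 + 4 * s ^ 2 * (x.2 - z) ^ 2)
  have hD : D ^ 2 = B ^ 2 + 4 * s ^ 2 * (x.2 - z) ^ 2 := sq_sqrt (by positivity)
  have hBD : -B ≤ D := (neg_le_abs B).trans (abs_le_sqrt_sq_add (by positivity))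
  have hr : ellipticRadius z s x ^ 2 = (B + D) / 2 := sq_sqrt (by linarith)
  rw [hr]
  linear_combination (1 / 4 : ℝ) * hD

lemma abs_le_ellipticRadius (hs : s ≠ 0) : |x.2 - z| ≤ ellipticRadius z s x := by
  refine abs_le_of_sq_le_sq ?_ ellipticRadius_nonneg
  have h : 0 ≤ (ellipticRadius z s x ^ 2 - (x.2 - z) ^ 2) *
      (ellipticRadius z s x ^ 2 + s ^ 2) := by
    rw [ellipticRadius_sq_sub_mul]; positivity
  linarith [nonneg_of_mul_nonneg_left h (by positivity)]

lemma abs_lt_ellipticRadius (hρ : 0 < x.1) (hr : 0 < ellipticRadius z s x) :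
    |x.2 - z| < ellipticRadius z s x := by
  refine abs_lt_of_sq_lt_sq ?_ hr.le
  have h : 0 < (ellipticRadius z s x ^ 2 - (x.2 - z) ^ 2) *
      (ellipticRadius z s x ^ 2 + s ^ 2) := by
    rw [ellipticRadius_sq_sub_mul]; positivity
  linarith [pos_of_mul_pos_left h (by positivity)]

lemma ellipticRadius_pos (hs : 0 < s) (h : x.2 ≠ z ∨ s < x.1) : 0 < ellipticRadius z s x := by
  refine sqrt_pos.2 (half_pos ?_)
  rcases h with hw | hρ
  · have hw2 : 0 < (x.2 - z) ^ 2 := pow_two_pos_of_ne_zero (sub_ne_zero.2 hw)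
    have : |x.1 ^ 2 + (x.2 - z) ^ 2 - s ^ 2| <
        √((x.1 ^ 2 + (x.2 - z) ^ 2 - s ^ 2) ^ 2 + 4 * s ^ 2 * (x.2 - z) ^ 2) := by
      rw [lt_sqrt (abs_nonneg _), sq_abs]
      nlinarith [mul_pos (pow_pos hs 2) hw2]
    linarith [neg_abs_le (x.1 ^ 2 + (x.2 - z) ^ 2 - s ^ 2)]
  · have : 0 < x.1 ^ 2 + (x.2 - z) ^ 2 - s ^ 2 := by nlinarith
    positivity

lemma cos_ellipticAngle (hs : s ≠ 0) :
    cos (ellipticAngle z s x) = (x.2 - z) / ellipticRadius z s x := by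
  have h : |(x.2 - z) / ellipticRadius z s x| ≤ 1 := by
    rw [abs_div]
    exact div_le_one_of_le₀ ((abs_le_ellipticRadius hs).trans (le_abs_self _)) (abs_nonneg _)
  exact cos_arccos (abs_le.1 h).1 (abs_le.1 h).2

lemma ellipticRadius_mul_cos_ellipticAngle (hs : s ≠ 0) :
    ellipticRadius z s x * cos (ellipticAngle z s x) = x.2 - z := by
  rw [cos_ellipticAngle hs]
  rcases ellipticRadius_nonneg.eq_or_lt with hr | hr
  · have := abs_le_ellipticRadius (z := z) (x := x) hs
    rw [← hr] at this ⊢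
    simp [abs_nonpos_iff.1 this]
  · exact mul_div_cancel₀ _ hr.ne'

lemma abs_cos_ellipticAngle_lt_one (hs : s ≠ 0) (hρ : 0 < x.1)
    (hr : 0 < ellipticRadius z s x) : |cos (ellipticAngle z s x)| < 1 := by
  rw [cos_ellipticAngle hs, abs_div, abs_of_pos hr, div_lt_one hr]
  exact abs_lt_ellipticRadius hρ hr

lemma isEllipticCoords_ellipticRadius (hs : 0 < s) (hρ : 0 < x.1) (h : x.2 ≠ z ∨ s < x.1) :
    IsEllipticCoords z s x (ellipticRadius z s x) (ellipticAngle z s x) := by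
  have hr := ellipticRadius_pos hs h
  have hc : |(x.2 - z) / ellipticRadius z s x| < 1 := by
    rw [← cos_ellipticAngle hs.ne']; exact abs_cos_ellipticAngle_lt_one hs.ne' hρ hr
  refine ⟨hr, ⟨arccos_pos.2 (abs_lt.1 hc).2, arccos_lt_pi.2 (abs_lt.1 hc).1⟩, ?_, ?_⟩
  · have key : (ellipticRadius z s x ^ 2 + s ^ 2) *
        (1 - ((x.2 - z) / ellipticRadius z s x) ^ 2) = x.1 ^ 2 := by
      field_simp
      linear_combination (ellipticRadius_sq_sub_mul (z := z) (s := s) (x := x))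
    rw [ellipticAngle, sin_arccos, ← sqrt_mul (by positivity), key, sqrt_sq hρ.le]
  · rw [ellipticRadius_mul_cos_ellipticAngle hs.ne']
    ring

end EllipticCoords

noncomputable def halfPlaneAtInfty : Filter (ℝ × ℝ) :=
  comap (fun x => √(x.1 ^ 2 + x.2 ^ 2)) atTop ⊓ 𝓟 {x | 0 < x.1}

lemma eventually_halfPlaneAtInfty_iff {p : ℝ × ℝ → Prop} :
    (∀ᶠ x in halfPlaneAtInfty, p x) ↔
      ∃ R, ∀ x : ℝ × ℝ, 0 < x.1 → R < √(x.1 ^ 2 + x.2 ^ 2) → p x := by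
  rw [halfPlaneAtInfty, ((atTop_basis_Ioi.comap _).inf_principal _).eventually_iff]
  simp only [true_and, Set.mem_inter_iff, Set.mem_preimage, Set.mem_Ioi, Set.mem_ofPred_eq]
  exact exists_congr fun R => ⟨fun h x hρ hR => h ⟨hR, hρ⟩, fun h x hx => h x hx.2 hx.1⟩

lemma tendsto_halfPlaneAtInfty_of_norm_sub_lt {E : Type*} [SeminormedAddCommGroup E]
    {f : ℝ × ℝ → E} {a : E}
    (h : ∀ ε > (0 : ℝ), ∃ M : ℝ, ∀ x : ℝ × ℝ, 0 < x.1 →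
      M < √(x.1 ^ 2 + x.2 ^ 2) → ‖f x - a‖ < ε) :
    Tendsto f halfPlaneAtInfty (𝓝 a) :=
  Metric.tendsto_nhds.2 fun ε hε => eventually_halfPlaneAtInfty_iff.2 <| by
    simpa only [dist_eq_norm] using h ε hε

lemma eventually_fst_pos_halfPlaneAtInfty : ∀ᶠ x in halfPlaneAtInfty, 0 < x.1 :=
  mem_inf_of_right (mem_principal_self _)

lemma tendsto_sq_add_sq_halfPlaneAtInfty :
    Tendsto (fun x : ℝ × ℝ => x.1 ^ 2 + x.2 ^ 2) halfPlaneAtInfty atTop := by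
  have h : Tendsto (fun x : ℝ × ℝ => √(x.1 ^ 2 + x.2 ^ 2)) halfPlaneAtInfty atTop :=
    tendsto_comap.mono_left inf_le_left
  refine ((tendsto_pow_atTop two_ne_zero).comp h).congr fun x => ?_
  exact sq_sqrt (by positivity)

lemma tendsto_ellipticRadius_halfPlaneAtInfty (z s : ℝ) :
    Tendsto (ellipticRadius z s) halfPlaneAtInfty atTop := by
  have h := tendsto_atTop_add_const_right _ (-(z ^ 2 + s ^ 2))
    (tendsto_sq_add_sq_halfPlaneAtInfty.atTop_div_const two_pos)
  refine tendsto_atTop_mono (fun x => sqrt_le_ellipticRadius) (tendsto_sqrt_atTop.comp ?_)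
  refine tendsto_atTop_mono (fun x => ?_) h
  nlinarith [sq_nonneg (x.2 - 2 * z), sq_nonneg x.1]

lemma norm_sub_conj_self (a : ℂ) : ‖a - conj a‖ = 2 * |a.im| := by
  rw [Complex.sub_conj, norm_mul, Complex.norm_I, mul_one, Complex.norm_real, Real.norm_eq_abs,
    abs_mul, abs_two]

lemma abs_im_add_abs_im_le_norm_sub_conj {a b : ℂ} (ha : a.im ≤ 0) (hb : b.im ≤ 0) :
    |a.im| + |b.im| ≤ ‖a - conj b‖ := by
  have := Complex.abs_im_le_norm (a - conj b)
  simp only [Complex.sub_im, Complex.conj_im, sub_neg_eq_add] at this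
  rwa [abs_of_nonpos ha, abs_of_nonpos hb, ← neg_add, ← abs_of_nonpos (add_nonpos ha hb)]

lemma abs_re_sub_re_le_norm_sub_conj (a b : ℂ) : |a.re - b.re| ≤ ‖a - conj b‖ := by
  simpa using Complex.abs_re_le_norm (a - conj b)

/-- The factor by which `‖c‖` enters row `a` of the matrix `c / (a - conj b)` once that row is
multiplied by its diagonal denominator `‖a - conj a‖`. -/
noncomputable def cauchyWeight (a b : ℂ) : ℝ := ‖a - conj a‖ / ‖a - conj b‖

lemma cauchyWeight_le_two {a b : ℂ} (ha : a.im ≤ 0) (hb : b.im ≤ 0) :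
    cauchyWeight a b ≤ 2 := by
  refine div_le_of_le_mul₀ (norm_nonneg _) zero_le_two ?_
  rw [norm_sub_conj_self]
  linarith [abs_im_add_abs_im_le_norm_sub_conj ha hb, abs_nonneg b.im]

lemma tendsto_cauchyWeight_zero {α : Type*} {l : Filter α} {a b : α → ℂ} {C : ℝ}
    (hC : ∀ᶠ x in l, |(a x).im| ≤ C)
    (hsep : Tendsto (fun x => |(a x).re - (b x).re|) l atTop) :
    Tendsto (fun x => cauchyWeight (a x) (b x)) l (𝓝 0) := by
  refine tendsto_of_tendsto_of_tendsto_of_le_of_le' tendsto_const_nhds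
    ((tendsto_const_nhds (x := 2 * C)).div_atTop hsep)
    (Eventually.of_forall fun x => by unfold cauchyWeight; positivity) ?_
  filter_upwards [hC, hsep.eventually_gt_atTop 0] with x hCx hpos
  rw [cauchyWeight, norm_sub_conj_self]
  exact div_le_div₀ (by linarith [abs_nonneg (a x).im]) (by linarith) hpos
    (abs_re_sub_re_le_norm_sub_conj _ _)

lemma sum_norm_div_sub_conj_lt {ι : Type*} [Fintype ι] [DecidableEq ι] (Λ : ι → ℂ)
    (c : ι → ℂ) {i : ι} (hi : (Λ i).im ≠ 0)
    (h : ∑ j ∈ Finset.univ.erase i, ‖c j‖ * cauchyWeight (Λ i) (Λ j) < ‖c i‖) :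
    ∑ j ∈ Finset.univ.erase i, ‖c j / (Λ i - conj (Λ j))‖ < ‖c i / (Λ i - conj (Λ i))‖ := by
  have hd : 0 < ‖Λ i - conj (Λ i)‖ := by rw [norm_sub_conj_self]; positivity
  have key : ∀ j, ‖c j / (Λ i - conj (Λ j))‖ =
      ‖c j‖ * cauchyWeight (Λ i) (Λ j) / ‖Λ i - conj (Λ i)‖ := fun j => by
    rw [norm_div, cauchyWeight, mul_div_assoc', mul_div_right_comm,
      mul_div_cancel_right₀ _ hd.ne']
  simp_rw [key, ← Finset.sum_div]
  exact div_lt_div_of_pos_right (by rwa [cauchyWeight, div_self hd.ne', mul_one]) hd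

theorem eventually_sum_norm_div_sub_conj_lt {α ι β : Type*} [Fintype ι] [DecidableEq ι]
    [DecidableEq β] {l : Filter α} (blk : ι → β) (Λ : α → ι → ℂ) (c : α → ι → ι → ℂ)
    {g : ι → ι → ℂ} (hc : ∀ i j, Tendsto (fun x => c x i j) l (𝓝 (g i j)))
    (him : ∀ᶠ x in l, ∀ i, (Λ x i).im < 0)
    (hbdd : ∀ i, ∃ C, ∀ᶠ x in l, |(Λ x i).im| ≤ C)
    (hsep : ∀ i j, blk i ≠ blk j → Tendsto (fun x => |(Λ x i).re - (Λ x j).re|) l atTop)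
    (hg : ∀ i, ∑ j ∈ Finset.univ.erase i with blk j = blk i, 2 * ‖g i j‖ < ‖g i i‖) :
    ∀ᶠ x in l, ∀ i, ∑ j ∈ Finset.univ.erase i, ‖c x i j / (Λ x i - conj (Λ x j))‖ <
      ‖c x i i / (Λ x i - conj (Λ x i))‖ := by
  refine eventually_all.2 fun i => ?_
  obtain ⟨C, hC⟩ := hbdd i
  -- within the block of `i` the weights are at most `2`, across blocks they tend to `0`
  let t : α → ι → ℝ := fun x j =>
    if blk j = blk i then 2 * ‖c x i j‖ else ‖c x i j‖ * cauchyWeight (Λ x i) (Λ x j)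
  have ht : ∀ j, Tendsto (t · j) l (𝓝 (if blk j = blk i then 2 * ‖g i j‖ else 0)) := by
    intro j
    by_cases h : blk j = blk i
    · simpa only [t, if_pos h] using ((hc i j).norm.const_mul 2)
    · simpa only [t, if_neg h, mul_zero] using
        (hc i j).norm.mul (tendsto_cauchyWeight_zero hC (hsep i j (Ne.symm h)))
  have hlim : ∀ᶠ x in l, ∑ j ∈ Finset.univ.erase i, t x j < ‖c x i i‖ :=
    (tendsto_finsetSum _ fun j _ => ht j).eventually_lt (hc i i).norm
      (by rw [← Finset.sum_filter]; exact hg i)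
  filter_upwards [hlim, him] with x hx hxim
  refine sum_norm_div_sub_conj_lt (Λ x) (c x i) (hxim i).ne
    (lt_of_le_of_lt (Finset.sum_le_sum fun j _ => ?_) hx)
  by_cases h : blk j = blk i
  · simp only [t, if_pos h, mul_comm (2 : ℝ)]
    exact mul_le_mul_of_nonneg_left (cauchyWeight_le_two (hxim i).le (hxim j).le)
      (norm_nonneg _)
  · simp only [t, if_neg h, le_refl]

/-- The indices `inl k` and `inr k` stand for the paper's `k` and `N + k`. -/
noncomputable def spectralParam {ι : Type*} (zc sc : ι → ℝ) (x : ℝ × ℝ) : ι ⊕ ι → ℂ :=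
  Sum.elim
    (fun k => ((ellipticRadius (zc k) (sc k) x : ℂ) - (sc k : ℂ) * Complex.I) *
      ((cos (ellipticAngle (zc k) (sc k) x) : ℂ) + 1))
    (fun k => ((ellipticRadius (zc k) (sc k) x : ℂ) + (sc k : ℂ) * Complex.I) *
      ((cos (ellipticAngle (zc k) (sc k) x) : ℂ) - 1))

section SpectralParam

variable {ι : Type*} {zc sc : ι → ℝ}

lemma im_spectralParam_inl (x : ℝ × ℝ) (k : ι) :
    (spectralParam zc sc x (.inl k)).im =
      -(sc k * (cos (ellipticAngle (zc k) (sc k) x) + 1)) := by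
  simp [spectralParam, -Complex.ofReal_cos]

lemma im_spectralParam_inr (x : ℝ × ℝ) (k : ι) :
    (spectralParam zc sc x (.inr k)).im = sc k * (cos (ellipticAngle (zc k) (sc k) x) - 1) := by
  simp [spectralParam, -Complex.ofReal_cos]

lemma re_spectralParam_inl_sub_inr (hsc : ∀ k, 0 < sc k) (x : ℝ × ℝ) (a b : ι) :
    (spectralParam zc sc x (.inl a)).re - (spectralParam zc sc x (.inr b)).re =
      ellipticRadius (zc a) (sc a) x + ellipticRadius (zc b) (sc b) x + (zc b - zc a) := by
  have ha := ellipticRadius_mul_cos_ellipticAngle (z := zc a) (x := x) (hsc a).ne'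
  have hb := ellipticRadius_mul_cos_ellipticAngle (z := zc b) (x := x) (hsc b).ne'
  simp only [spectralParam, Sum.elim_inl, Sum.elim_inr, Complex.mul_re, Complex.sub_re,
    Complex.add_re, Complex.ofReal_re, Complex.mul_im, Complex.ofReal_im, Complex.I_re,
    Complex.I_im, Complex.sub_im, Complex.add_im, Complex.one_re, Complex.one_im]
  linear_combination ha - hb

lemma abs_im_spectralParam_le (hsc : ∀ k, 0 < sc k) (x : ℝ × ℝ) (i : ι ⊕ ι) :
    |(spectralParam zc sc x i).im| ≤ 2 * Sum.elim sc sc i := by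
  rcases i with k | k
  · rw [im_spectralParam_inl, abs_neg, Sum.elim_inl, abs_le]
    constructor <;> nlinarith [hsc k, neg_one_le_cos (ellipticAngle (zc k) (sc k) x),
      cos_le_one (ellipticAngle (zc k) (sc k) x)]
  · rw [im_spectralParam_inr, Sum.elim_inr, abs_le]
    constructor <;> nlinarith [hsc k, neg_one_le_cos (ellipticAngle (zc k) (sc k) x),
      cos_le_one (ellipticAngle (zc k) (sc k) x)]

lemma eventually_im_spectralParam_neg [Finite ι] (hsc : ∀ k, 0 < sc k) :
    ∀ᶠ x in halfPlaneAtInfty, ∀ i, (spectralParam zc sc x i).im < 0 := by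
  have hcos : ∀ k, ∀ᶠ x in halfPlaneAtInfty, |cos (ellipticAngle (zc k) (sc k) x)| < 1 :=
    fun k => by
      filter_upwards [eventually_fst_pos_halfPlaneAtInfty,
        (tendsto_ellipticRadius_halfPlaneAtInfty (zc k) (sc k)).eventually_gt_atTop 0]
        with x hρ hr
      exact abs_cos_ellipticAngle_lt_one (hsc k).ne' hρ hr
  filter_upwards [eventually_all.2 hcos] with x hx
  rintro (k | k) <;> have := abs_lt.1 (hx k)
  · rw [im_spectralParam_inl, neg_neg_iff_pos]
    exact mul_pos (hsc k) (by linarith)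
  · rw [im_spectralParam_inr]
    exact mul_neg_of_pos_of_neg (hsc k) (by linarith)

lemma tendsto_abs_re_spectralParam_sub (hsc : ∀ k, 0 < sc k) {i j : ι ⊕ ι}
    (hij : i.isLeft ≠ j.isLeft) :
    Tendsto (fun x => |(spectralParam zc sc x i).re - (spectralParam zc sc x j).re|)
      halfPlaneAtInfty atTop := by
  have key : ∀ a b : ι, Tendsto (fun x =>
      |(spectralParam zc sc x (.inl a)).re - (spectralParam zc sc x (.inr b)).re|)
      halfPlaneAtInfty atTop := fun a b => by
    refine tendsto_atTop_mono (fun x => ?_) (tendsto_atTop_add_const_right _ (zc b - zc a)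
      (tendsto_ellipticRadius_halfPlaneAtInfty (zc a) (sc a)))
    rw [re_spectralParam_inl_sub_inr hsc]
    exact le_abs.2 <| .inl <| by
      linarith [ellipticRadius_nonneg (z := zc b) (s := sc b) (x := x)]
  rcases i with a | a <;> rcases j with b | b
  · exact absurd rfl hij
  · exact key a b
  · simpa only [abs_sub_comm] using key b a
  · exact absurd rfl hij

end SpectralParam

lemma Matrix.IsHermitian.star_mulVec_dotProduct_mulVec_mulVec {n R : Type*} [Fintype n]
    [DecidableEq n] [Semiring R] [StarRing R] {Γ : Matrix n n R} (hΓ : Γ.IsHermitian)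
    (hΓ2 : Γ * Γ = 1) (u w : n → R) : star (Γ *ᵥ u) ⬝ᵥ Γ *ᵥ (Γ *ᵥ w) = star u ⬝ᵥ Γ *ᵥ w := by
  rw [mulVec_mulVec, hΓ2, one_mulVec, star_mulVec, ← dotProduct_mulVec, hΓ.eq]

section SumErase

variable {α M : Type*} [Fintype α] [DecidableEq α] [AddCommMonoid M]

lemma sum_erase_inl_filter_isLeft (f : α ⊕ α → M) (a : α) :
    ∑ j ∈ Finset.univ.erase (.inl a) with j.isLeft = (Sum.inl a : α ⊕ α).isLeft, f j =
      ∑ b ∈ Finset.univ.erase a, f (.inl b) := by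
  have : {j ∈ Finset.univ.erase (Sum.inl a : α ⊕ α) |
      j.isLeft = (Sum.inl a : α ⊕ α).isLeft} =
      (Finset.univ.erase a).map Function.Embedding.inl := by
    ext (j | j) <;> rw [Finset.mem_filter] <;> simp
  rw [this, Finset.sum_map]
  rfl

lemma sum_erase_inr_filter_isLeft (f : α ⊕ α → M) (a : α) :
    ∑ j ∈ Finset.univ.erase (.inr a) with j.isLeft = (Sum.inr a : α ⊕ α).isLeft, f j =
      ∑ b ∈ Finset.univ.erase a, f (.inr b) := by
  have : {j ∈ Finset.univ.erase (Sum.inr a : α ⊕ α) |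
      j.isLeft = (Sum.inr a : α ⊕ α).isLeft} =
      (Finset.univ.erase a).map Function.Embedding.inr := by
    ext (j | j) <;> rw [Finset.mem_filter] <;> simp
  rw [this, Finset.sum_map]
  rfl

end SumErase

lemma sum_two_mul_norm_star_dotProduct_mulVec_lt {ι n : Type*} [Fintype ι] [DecidableEq ι]
    [Fintype n] [DecidableEq n] {Γ : Matrix n n ℂ} (hΓ : Γ.IsHermitian) (hΓ2 : Γ * Γ = 1)
    {v : ι → n → ℂ}
    (hv : ∀ k, ∑ j ∈ Finset.univ.erase k, ‖star (v k) ⬝ᵥ Γ *ᵥ v j‖ <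
      1 / 2 * ‖star (v k) ⬝ᵥ Γ *ᵥ v k‖) (i : ι ⊕ ι) :
    ∑ j ∈ Finset.univ.erase i with j.isLeft = i.isLeft,
        2 * ‖star (Sum.elim v (Γ *ᵥ v ·) i) ⬝ᵥ Γ *ᵥ Sum.elim v (Γ *ᵥ v ·) j‖ <
      ‖star (Sum.elim v (Γ *ᵥ v ·) i) ⬝ᵥ Γ *ᵥ Sum.elim v (Γ *ᵥ v ·) i‖ := by
  rcases i with k | k
  · rw [sum_erase_inl_filter_isLeft]
    simp only [Sum.elim_inl, ← Finset.mul_sum]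
    linarith [hv k]
  · rw [sum_erase_inr_filter_isLeft]
    simp only [Sum.elim_inr, hΓ.star_mulVec_dotProduct_mulVec_mulVec hΓ2, ← Finset.mul_sum]
    linarith [hv k]

theorem statement14_general (n N : ℕ)
    (Γ : Matrix (Fin n) (Fin n) ℂ) (hΓherm : Γ.IsHermitian) (hΓ2 : Γ * Γ = 1)
    (zc sc : Fin N → ℝ) (hsc : ∀ k, 0 < sc k)
    (v : Fin N → Fin n → ℂ)
    (hv : ∀ k : Fin N,
      ∑ j ∈ Finset.univ.erase k, ‖star (v k) ⬝ᵥ Γ.mulVec (v j)‖ <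
        (1 / 2) * ‖star (v k) ⬝ᵥ Γ.mulVec (v k)‖)
    (S : (Fin N ⊕ Fin N) → (Fin N ⊕ Fin N) → ℝ × ℝ → Matrix (Fin n) (Fin n) ℂ)
    (hS : ∀ i j : Fin N ⊕ Fin N, ∀ ε > (0 : ℝ), ∃ M : ℝ, ∀ x : ℝ × ℝ, 0 < x.1 →
      M < Real.sqrt (x.1 ^ 2 + x.2 ^ 2) → ‖S i j x - Γ‖ < ε) :
    ∃ R > (0 : ℝ), ∀ x : ℝ × ℝ, 0 < x.1 → (∀ k : Fin N, x.2 ≠ zc k ∨ sc k < x.1) →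
      R < Real.sqrt (x.1 ^ 2 + x.2 ^ 2) →
      ∃ r θ : Fin N → ℝ,
        (∀ k : Fin N, 0 < r k ∧ θ k ∈ Set.Ioo 0 Real.pi ∧
          x.1 = Real.sqrt (r k ^ 2 + sc k ^ 2) * Real.sin (θ k) ∧
          x.2 = zc k + r k * Real.cos (θ k)) ∧
        (let Λ : Fin N ⊕ Fin N → ℂ := Sum.elim
            (fun k => ((r k : ℂ) - (sc k : ℂ) * Complex.I) * ((Real.cos (θ k) : ℂ) + 1))
            (fun k => ((r k : ℂ) + (sc k : ℂ) * Complex.I) * ((Real.cos (θ k) : ℂ) - 1))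
         let vv : Fin N ⊕ Fin N → Fin n → ℂ := Sum.elim v fun k => Γ.mulVec (v k)
         let A : Matrix (Fin N ⊕ Fin N) (Fin N ⊕ Fin N) ℂ := Matrix.of fun i j =>
            (star (vv i) ⬝ᵥ (S i j x).mulVec (vv j)) / (Λ i - starRingEnd ℂ (Λ j))
         (∀ i : Fin N ⊕ Fin N,
            ∑ j ∈ Finset.univ.erase i, ‖A i j‖ < ‖A i i‖) ∧
          A.det ≠ 0) := by
  set vv : Fin N ⊕ Fin N → Fin n → ℂ := Sum.elim v (Γ *ᵥ v ·)
  have hc : ∀ i j, Tendsto (fun x => star (vv i) ⬝ᵥ S i j x *ᵥ vv j) halfPlaneAtInfty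
      (𝓝 (star (vv i) ⬝ᵥ Γ *ᵥ vv j)) := fun i j =>
    ((continuous_const.dotProduct (continuous_id.matrix_mulVec continuous_const)).tendsto
      Γ).comp (tendsto_halfPlaneAtInfty_of_norm_sub_lt (hS i j))
  have hdom := eventually_sum_norm_div_sub_conj_lt Sum.isLeft (spectralParam zc sc) _ hc
    (eventually_im_spectralParam_neg hsc)
    (fun i => ⟨_, .of_forall (abs_im_spectralParam_le hsc · i)⟩)
    (fun _ _ => tendsto_abs_re_spectralParam_sub hsc)
    (sum_two_mul_norm_star_dotProduct_mulVec_lt hΓherm hΓ2 hv)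
  obtain ⟨R, hR⟩ := eventually_halfPlaneAtInfty_iff.1 hdom
  refine ⟨max R 1, by positivity, fun x hρ hx hxR =>
    ⟨fun k => ellipticRadius (zc k) (sc k) x, fun k => ellipticAngle (zc k) (sc k) x,
      fun k => isEllipticCoords_ellipticRadius (hsc k) hρ (hx k), ?_⟩⟩
  have hrow := hR x hρ ((le_max_left R 1).trans_lt hxR)
  exact ⟨hrow, det_ne_zero_of_sum_row_lt_diag hrow⟩

/-- invertibility of the dressing matrix near infinity: under the
diagonal-dominance condition on the constant vectors `v_k` and the convergence
`S_{ij}(x) → Γ` as `|x| → ∞`, there is `R > 0` such that for all `x ∈ ℝ²₊` with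
`|x| > R` the elliptical coordinates are defined and the `2N×2N` matrix
`A(x) = (v_i* S_{ij}(x) v_j/(λ_i(x) − conj λ_j(x)))` is strictly diagonally dominant,
hence invertible. -/
theorem statement14 (n N : ℕ) (hn : 1 ≤ n) (hN : 1 ≤ N)
    (Γ : Matrix (Fin n) (Fin n) ℂ) (hΓherm : Γ.IsHermitian) (hΓ2 : Γ * Γ = 1)
    (zc sc : Fin N → ℝ) (hsc : ∀ k, 0 < sc k)
    (hdist : ∀ j k : Fin N, j ≠ k →
      (zc j : ℂ) + (sc j : ℂ) * Complex.I ≠ (zc k : ℂ) + (sc k : ℂ) * Complex.I)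
    (v : Fin N → Fin n → ℂ)
    (hv : ∀ k : Fin N,
      ∑ j ∈ Finset.univ.erase k, ‖star (v k) ⬝ᵥ Γ.mulVec (v j)‖ <
        (1 / 2) * ‖star (v k) ⬝ᵥ Γ.mulVec (v k)‖)
    (S : (Fin N ⊕ Fin N) → (Fin N ⊕ Fin N) → ℝ × ℝ → Matrix (Fin n) (Fin n) ℂ)
    (hS : ∀ i j : Fin N ⊕ Fin N, ∀ ε > (0 : ℝ), ∃ M : ℝ, ∀ x : ℝ × ℝ, 0 < x.1 →
      M < Real.sqrt (x.1 ^ 2 + x.2 ^ 2) → ‖S i j x - Γ‖ < ε) :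
    ∃ R > (0 : ℝ), ∀ x : ℝ × ℝ, 0 < x.1 → (∀ k : Fin N, x.2 ≠ zc k ∨ sc k < x.1) →
      R < Real.sqrt (x.1 ^ 2 + x.2 ^ 2) →
      ∃ r θ : Fin N → ℝ,
        (∀ k : Fin N, 0 < r k ∧ θ k ∈ Set.Ioo 0 Real.pi ∧
          x.1 = Real.sqrt (r k ^ 2 + sc k ^ 2) * Real.sin (θ k) ∧
          x.2 = zc k + r k * Real.cos (θ k)) ∧
        (let Λ : Fin N ⊕ Fin N → ℂ := Sum.elim
            (fun k => ((r k : ℂ) - (sc k : ℂ) * Complex.I) * ((Real.cos (θ k) : ℂ) + 1))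
            (fun k => ((r k : ℂ) + (sc k : ℂ) * Complex.I) * ((Real.cos (θ k) : ℂ) - 1))
         let vv : Fin N ⊕ Fin N → Fin n → ℂ := Sum.elim v fun k => Γ.mulVec (v k)
         let A : Matrix (Fin N ⊕ Fin N) (Fin N ⊕ Fin N) ℂ := Matrix.of fun i j =>
            (star (vv i) ⬝ᵥ (S i j x).mulVec (vv j)) / (Λ i - starRingEnd ℂ (Λ j))
         (∀ i : Fin N ⊕ Fin N,
            ∑ j ∈ Finset.univ.erase i, ‖A i j‖ < ‖A i i‖) ∧
          A.det ≠ 0) :=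
  statement14_general n N Γ hΓherm hΓ2 zc sc hsc v hv S hS
end

section
/- (Recovery of the Kerr metric.) Let m, s > 0 and set a = √(m²+s²). Put A = s, B = a, n₁ = m/2, n₂ = 0, and for real r, θ define F = A²((r−m)²+s²) − B² s² sin²θ and G = F + 2s²(B²−A²) + 4 s n₁ A (r−m) − 4 s² B n₂ cos θ. Then whenever r² + a² cos²θ ≠ 0 (equivalently G ≠ 0): F/G = (r² − 2mr + a² cos²θ)/(r² + a² cos²θ) and (4 s A n₂ (r−m) + 4 B n₁ s² cos θ)/G = (2 m a cos θ)/(r² + a² cos²θ). Moreover the real numbers α = √((a+s)/2) and δ = √((a−s)/2) satisfy α² − δ² = s, α² + δ² = a, and α·δ = m/2. -/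
/-!
Because `a² = m² + s²` and `sin²θ = 1 − cos²θ`, the dressed quantities `F`, `G` and the twist
numerator are `s²` times the Kerr numerator `r² − 2mr + a²cos²θ`, the Kerr denominator
`r² + a²cos²θ` and `2ma cos θ` respectively, so `s² ≠ 0` cancels. The vesture parameters
`α = √((a+s)/2)`, `δ = √((a−s)/2)` are real because `|s| ≤ a`, and `α δ = √(a² − s²)/2 = m/2`.
-/

open Real

section HalfSqrt

variable {a s : ℝ}

lemma sqrt_half_add_sq_sub_sqrt_half_sub_sq (h : |s| ≤ a) :
    √((a + s) / 2) ^ 2 - √((a - s) / 2) ^ 2 = s := by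
  rw [abs_le'] at h
  rw [sq_sqrt (by linarith), sq_sqrt (by linarith)]
  ring

lemma sqrt_half_add_sq_add_sqrt_half_sub_sq (h : |s| ≤ a) :
    √((a + s) / 2) ^ 2 + √((a - s) / 2) ^ 2 = a := by
  rw [abs_le'] at h
  rw [sq_sqrt (by linarith), sq_sqrt (by linarith)]
  ring

lemma sqrt_half_add_mul_sqrt_half_sub (h : |s| ≤ a) :
    √((a + s) / 2) * √((a - s) / 2) = √(a ^ 2 - s ^ 2) / 2 := by
  rw [abs_le'] at h
  rw [← sqrt_mul (by linarith),
    show (a + s) / 2 * ((a - s) / 2) = (a ^ 2 - s ^ 2) / 2 ^ 2 by ring,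
    sqrt_div' _ (by positivity), sqrt_sq zero_le_two]

end HalfSqrt

/-- recovery of the Kerr metric: with `a = √(m²+s²)`, `A = s`, `B = a`,
`n₁ = m/2`, `n₂ = 0`, `F = A²((r−m)²+s²) − B²s²sin²θ` and
`G = F + 2s²(B²−A²) + 4sn₁A(r−m) − 4s²Bn₂cos θ`, whenever `r² + a²cos²θ ≠ 0` one has
`F/G = (r² − 2mr + a²cos²θ)/(r² + a²cos²θ)` and
`(4sAn₂(r−m) + 4Bn₁s²cos θ)/G = 2ma cos θ/(r² + a²cos²θ)`; moreover
`α = √((a+s)/2)` and `δ = √((a−s)/2)` satisfy `α² − δ² = s`, `α² + δ² = a`,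
`α·δ = m/2`. -/
theorem statement16 (m s : ℝ) (hm : 0 < m) (hs : 0 < s) (r θ : ℝ) :
    let a : ℝ := Real.sqrt (m ^ 2 + s ^ 2)
    let A : ℝ := s
    let B : ℝ := a
    let n₁ : ℝ := m / 2
    let n₂ : ℝ := 0
    let F : ℝ := A ^ 2 * ((r - m) ^ 2 + s ^ 2) - B ^ 2 * s ^ 2 * Real.sin θ ^ 2
    let G : ℝ := F + 2 * s ^ 2 * (B ^ 2 - A ^ 2) + 4 * s * n₁ * A * (r - m) -
      4 * s ^ 2 * B * n₂ * Real.cos θ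
    let α : ℝ := Real.sqrt ((a + s) / 2)
    let δ : ℝ := Real.sqrt ((a - s) / 2)
    r ^ 2 + a ^ 2 * Real.cos θ ^ 2 ≠ 0 →
    (F / G = (r ^ 2 - 2 * m * r + a ^ 2 * Real.cos θ ^ 2) /
        (r ^ 2 + a ^ 2 * Real.cos θ ^ 2) ∧
      (4 * s * A * n₂ * (r - m) + 4 * B * n₁ * s ^ 2 * Real.cos θ) / G =
        (2 * m * a * Real.cos θ) / (r ^ 2 + a ^ 2 * Real.cos θ ^ 2) ∧
      α ^ 2 - δ ^ 2 = s ∧ α ^ 2 + δ ^ 2 = a ∧ α * δ = m / 2) := by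
  intro a A B n₁ n₂ F G α δ _
  have ha2 : a ^ 2 = m ^ 2 + s ^ 2 := sq_sqrt (by positivity)
  have hsa : |s| ≤ a := abs_le_sqrt (by nlinarith)
  have hs2 : s ^ 2 ≠ 0 := by positivity
  have hF : F = s ^ 2 * (r ^ 2 - 2 * m * r + a ^ 2 * cos θ ^ 2) := by
    simp only [F, A, B, sin_sq]
    linear_combination (-s ^ 2) * ha2
  have hG : G = s ^ 2 * (r ^ 2 + a ^ 2 * cos θ ^ 2) := by
    simp only [G, hF, A, B, n₁, n₂]
    linear_combination (2 * s ^ 2) * ha2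
  have hN : 4 * s * A * n₂ * (r - m) + 4 * B * n₁ * s ^ 2 * cos θ =
      s ^ 2 * (2 * m * a * cos θ) := by
    simp only [A, B, n₁, n₂]
    ring
  refine ⟨by rw [hF, hG, mul_div_mul_left _ _ hs2], by rw [hN, hG, mul_div_mul_left _ _ hs2],
    sqrt_half_add_sq_sub_sqrt_half_sub_sq hsa, sqrt_half_add_sq_add_sqrt_half_sub_sq hsa, ?_⟩
  calc α * δ = √(a ^ 2 - s ^ 2) / 2 := sqrt_half_add_mul_sqrt_half_sub hsa
    _ = m / 2 := by rw [ha2, add_sub_cancel_right, sqrt_sq hm.le]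
end
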